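/- arXiv:2506.23148 — 4 statements merged into one kernel-verified Lean document; each statement's English description precedes it below -/
import Mathlib

section
/- Fix any set R ⊆ {0,1,2}×{0,1,2}. Let S = {(0,0),(0,1),(0,2),(0,3)} ∪ {(a+1,b+1) : (a,b) ∈ R}, and set q1 = (123, S), q2 = (132, S), p1 = (12, R), p2 = (21, R). Then q1 and q2 are jointly equidistributed if and only if p1 and p2 are jointly equidistributed. -/
/-- The boundary-extended sequence of positions of a candidate occurrence:
`posExt i 0 = 0`, `posExt i a = i (a-1) + 1` (1-based position) for `1 ≤ a ≤ m`,
and `posExt i (m+1) = n + 1`. -/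
def posExt {m n : ℕ} (i : Fin m → Fin n) : ℕ → ℕ := fun a =>
  if h : 1 ≤ a ∧ a ≤ m then ((i ⟨a - 1, by omega⟩ : Fin n) : ℕ) + 1
  else if a = 0 then 0 else n + 1

/-- The boundary-extended increasing rearrangement of the values of a candidate
occurrence: `valExt τ π i 0 = 0`, `valExt τ π i b = π (i (τ⁻¹ (b-1))) + 1`
(the `b`-th smallest value, 1-based) for `1 ≤ b ≤ m`, and `valExt τ π i (m+1) = n + 1`. -/
def valExt {m n : ℕ} (τ : Equiv.Perm (Fin m)) (π : Equiv.Perm (Fin n))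
    (i : Fin m → Fin n) : ℕ → ℕ := fun b =>
  if h : 1 ≤ b ∧ b ≤ m then ((π (i (τ.symm ⟨b - 1, by omega⟩)) : Fin n) : ℕ) + 1
  else if b = 0 then 0 else n + 1

/-- `i : Fin m → Fin n` is an occurrence of the mesh pattern `(τ, R)` in the
permutation `π` of `{1, …, n}` (positions and values are taken 1-based via `+1`). -/
def IsMeshOcc {m n : ℕ} (τ : Equiv.Perm (Fin m)) (R : Set (ℕ × ℕ))
    (π : Equiv.Perm (Fin n)) (i : Fin m → Fin n) : Prop :=
  StrictMono i ∧
  (∀ a b : Fin m, π (i a) < π (i b) ↔ τ a < τ b) ∧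
  ∀ a b : ℕ, (a, b) ∈ R →
    ¬ ∃ j : Fin n,
        posExt i a < (j : ℕ) + 1 ∧ (j : ℕ) + 1 < posExt i (a + 1) ∧
        valExt τ π i b < ((π j : Fin n) : ℕ) + 1 ∧
        ((π j : Fin n) : ℕ) + 1 < valExt τ π i (b + 1)

/-- The number of occurrences of the mesh pattern `(τ, R)` in `π`. -/
noncomputable def occ {m n : ℕ} (τ : Equiv.Perm (Fin m)) (R : Set (ℕ × ℕ))
    (π : Equiv.Perm (Fin n)) : ℕ :=
  Nat.card {i : Fin m → Fin n // IsMeshOcc τ R π i}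

/-- Mesh patterns `(τ₁, R₁)` and `(τ₂, R₂)` are jointly equidistributed. -/
def JointlyEquidistributed {m₁ m₂ : ℕ} (τ₁ : Equiv.Perm (Fin m₁)) (R₁ : Set (ℕ × ℕ))
    (τ₂ : Equiv.Perm (Fin m₂)) (R₂ : Set (ℕ × ℕ)) : Prop :=
  ∀ n k ℓ : ℕ,
    Nat.card {π : Equiv.Perm (Fin n) // occ τ₁ R₁ π = k ∧ occ τ₂ R₂ π = ℓ} =
    Nat.card {π : Equiv.Perm (Fin n) // occ τ₁ R₁ π = ℓ ∧ occ τ₂ R₂ π = k}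

/-- The pattern 123 (identity on three letters). -/
def perm123 : Equiv.Perm (Fin 3) := 1

/-- The pattern 132 (0-indexed: `0 ↦ 0`, `1 ↦ 2`, `2 ↦ 1`). -/
def perm132 : Equiv.Perm (Fin 3) := Equiv.swap 1 2

/-- The pattern 12 (identity on two letters). -/
def perm12 : Equiv.Perm (Fin 2) := 1

/-- The pattern 21. -/
def perm21 : Equiv.Perm (Fin 2) := Equiv.swap 0 1

/-- The unsigned Stirling numbers of the first kind. -/
def stirlingFirst : ℕ → ℕ → ℕ
  | 0, 0 => 1
  | 0, _ + 1 => 0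
  | _ + 1, 0 => 0
  | n + 1, k + 1 => n * stirlingFirst n (k + 1) + stirlingFirst n k

/-!
Shading the whole first column of `1 ⊕ τ` forces an occurrence to start at the first entry
`π 0 = v` of `π`. The rest of the occurrence then consists of entries larger than `v`, and it is
exactly an occurrence of `(τ, R)` in the standardisation `σ` of those entries; so
`occ (1 ⊕ τ, S) π = occ (τ, R) σ`. Left multiplication by permutations of the values above `v`
fixes `π 0` and acts on `σ` by left multiplication, so for fixed `v` every `σ ∈ S_{n-1-v}` has the
same positive number `c_v` of preimages. Hence the joint distribution of `(q₁, q₂)` on `S_n` is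
`∑ v, c_v` times that of `(p₁, p₂)` on `S_{n-1-v}`. This gives one direction at once, and the other
by strong induction on `n`: only the summand `v = 0` involves `S_{n-1}`.
-/

open Finset Equiv

section Boundaries

variable {m n k : ℕ}

lemma posExt_zero (u : Fin m → Fin n) : posExt u 0 = 0 := by
  simp [posExt]

lemma posExt_succ (u : Fin m → Fin n) {a : ℕ} (ha : a < m) :
    posExt u (a + 1) = u ⟨a, ha⟩ + 1 := by
  simp [posExt, Nat.succ_le_of_lt ha]

lemma posExt_of_lt (u : Fin m → Fin n) {a : ℕ} (ha : m < a) : posExt u a = n + 1 := by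
  simp [posExt, show ¬a ≤ m by omega, show a ≠ 0 by omega]

lemma valExt_eq_posExt (τ : Perm (Fin m)) (π : Perm (Fin n)) (i : Fin m → Fin n) :
    valExt τ π i = posExt fun b => π (i (τ.symm b)) :=
  rfl

lemma posExt_comp_lt_iff {e : Fin k → Fin n} (he : StrictMono e) (u : Fin m → Fin k) (a : ℕ)
    (x : Fin k) : posExt (e ∘ u) a < e x + 1 ↔ posExt u a < x + 1 := by
  rcases a with _ | a
  · simp [posExt_zero]
  rcases lt_or_ge a m with ha | ha
  · simp [posExt_succ _ ha, he.lt_iff_lt]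
  · rw [posExt_of_lt _ (by omega), posExt_of_lt _ (by omega)]
    have := (e x).isLt
    omega

lemma lt_posExt_comp_iff {e : Fin k → Fin n} (he : StrictMono e) (u : Fin m → Fin k) (a : ℕ)
    (x : Fin k) : e x + 1 < posExt (e ∘ u) a ↔ x + 1 < posExt u a := by
  rcases a with _ | a
  · simp [posExt_zero]
  rcases lt_or_ge a m with ha | ha
  · simp [posExt_succ _ ha, he.lt_iff_lt]
  · rw [posExt_of_lt _ (by omega), posExt_of_lt _ (by omega)]
    have := (e x).isLt
    omega

lemma posExt_cons_one (c : Fin n) (f : Fin m → Fin n) :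
    posExt (Fin.cons c f : Fin (m + 1) → Fin n) 1 = c + 1 :=
  posExt_succ _ m.succ_pos

lemma posExt_cons_succ (c : Fin n) (f : Fin m → Fin n) {a : ℕ} (ha : a ≠ 0) :
    posExt (Fin.cons c f : Fin (m + 1) → Fin n) (a + 1) = posExt f a := by
  obtain ⟨a, rfl⟩ := Nat.exists_eq_succ_of_ne_zero ha
  rcases lt_or_ge a m with ha | ha
  · rw [posExt_succ _ (by omega), posExt_succ _ ha]
    rfl
  · rw [posExt_of_lt _ (by omega), posExt_of_lt _ (by omega)]

lemma add_one_le_posExt_cons {c : Fin n} {f : Fin m → Fin n} (hc : ∀ x, c < f x) (a : ℕ) :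
    c + 1 ≤ posExt (Fin.cons c f : Fin (m + 1) → Fin n) (a + 1) := by
  rcases eq_or_ne a 0 with rfl | ha
  · rw [posExt_cons_one]
  rw [posExt_cons_succ _ _ ha]
  obtain ⟨a, rfl⟩ := Nat.exists_eq_succ_of_ne_zero ha
  rcases lt_or_ge a m with ha | ha
  · rw [posExt_succ _ ha]
    have := hc ⟨a, ha⟩
    omega
  · rw [posExt_of_lt _ (by omega)]
    omega

lemma posExt_cons_comp_lt_iff {e : Fin k → Fin n} (he : StrictMono e) {c : Fin n}
    (hc : ∀ x, c < e x) (u : Fin m → Fin k) (a : ℕ) (x : Fin k) :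
    posExt (Fin.cons c (e ∘ u) : Fin (m + 1) → Fin n) (a + 1) < e x + 1 ↔
      posExt u a < x + 1 := by
  rcases eq_or_ne a 0 with rfl | ha
  · simp [posExt_cons_one, posExt_zero, hc x]
  · rw [posExt_cons_succ _ _ ha]
    exact posExt_comp_lt_iff he u a x

lemma lt_posExt_cons_comp_iff {e : Fin k → Fin n} (he : StrictMono e) {c : Fin n}
    (hc : ∀ x, c < e x) (u : Fin m → Fin k) (a : ℕ) (x : Fin k) :
    e x + 1 < posExt (Fin.cons c (e ∘ u) : Fin (m + 1) → Fin n) (a + 1) ↔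
      x + 1 < posExt u a := by
  rcases eq_or_ne a 0 with rfl | ha
  · simp [posExt_cons_one, posExt_zero, (hc x).le]
  · rw [posExt_cons_succ _ _ ha]
    exact lt_posExt_comp_iff he u a x

lemma exists_posExt_lt_lt (w : Fin m → Fin n) (y : Fin n) (hy : ∀ a, w a ≠ y) :
    ∃ b ≤ m, posExt w b < y + 1 ∧ y + 1 < posExt w (b + 1) := by
  have hm : ∃ b, y + 1 ≤ posExt w (b + 1) := ⟨m, by rw [posExt_of_lt _ (by omega)]; omega⟩
  refine ⟨Nat.find hm, Nat.find_min' hm (by rw [posExt_of_lt _ (by omega)]; omega), ?_, ?_⟩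
  · rcases hb : Nat.find hm with _ | b
    · simp [posExt_zero]
    · exact not_le.1 (Nat.find_min hm (hb ▸ b.lt_succ_self))
  · refine lt_of_le_of_ne (Nat.find_spec hm) fun hyw => ?_
    rcases lt_or_ge (Nat.find hm) m with hb | hb
    · rw [posExt_succ _ hb] at hyw
      exact hy ⟨_, hb⟩ (Fin.ext (by omega))
    · rw [posExt_of_lt _ (by omega)] at hyw
      omega

end Boundaries

lemma IsMeshOcc.apply_zero_eq_zero {m N : ℕ} {τ : Perm (Fin (m + 1))} {S : Set (ℕ × ℕ)}
    {π : Perm (Fin (N + 1))} {i : Fin (m + 1) → Fin (N + 1)}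
    (hS : ∀ b ≤ m + 1, (0, b) ∈ S) (hi : IsMeshOcc τ S π i) : i 0 = 0 := by
  by_contra h0
  have hy : ∀ a, π (i (τ.symm a)) ≠ π 0 := fun a ha =>
    h0 (le_antisymm ((hi.1.monotone (Fin.zero_le _)).trans_eq (π.injective ha)) (Fin.zero_le _))
  obtain ⟨b, hb, hlo, hhi⟩ := exists_posExt_lt_lt _ (π 0) hy
  refine hi.2.2 0 b (hS b hb) ⟨0, by simp [posExt_zero], ?_, hlo, hhi⟩
  rw [zero_add, posExt_succ _ m.succ_pos, Fin.val_zero]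
  exact Nat.succ_lt_succ (Fin.pos_iff_ne_zero.2 h0)

section RestrictAbove

variable {N : ℕ} (π : Perm (Fin (N + 1))) (v : Fin (N + 1))

def abovePos : Finset (Fin (N + 1)) :=
  (Ioi v).map π.symm.toEmbedding

variable {π v} in
lemma mem_abovePos {j : Fin (N + 1)} : j ∈ abovePos π v ↔ v < π j := by
  simp [abovePos]

lemma card_Ioi_eq_sub : #(Ioi v) = N - v := by
  rw [Fin.card_Ioi, Nat.add_sub_cancel]

lemma card_abovePos : #(abovePos π v) = N - v := by
  rw [abovePos, card_map, card_Ioi_eq_sub]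

def posEmb : Fin (N - v) ↪o Fin (N + 1) :=
  (abovePos π v).orderEmbOfFin (card_abovePos π v)

def valEmb : Fin (N - v) ↪o Fin (N + 1) :=
  (Ioi v).orderEmbOfFin (card_Ioi_eq_sub v)

/- The standardisation of the subsequence of `π` formed by its entries larger than `v`. -/
def restrictAbove : Perm (Fin (N - v)) :=
  ((abovePos π v).orderIsoOfFin (card_abovePos π v)).toEquiv.trans <|
    (π.subtypeEquiv fun _ => by rw [mem_abovePos, mem_Ioi]).trans
      ((Ioi v).orderIsoOfFin (card_Ioi_eq_sub v)).toEquiv.symm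

lemma valEmb_restrictAbove (x : Fin (N - v)) :
    valEmb v (restrictAbove π v x) = π (posEmb π v x) := by
  simp only [restrictAbove, valEmb, posEmb, ← coe_orderIsoOfFin_apply]
  simp

lemma lt_apply_posEmb (x : Fin (N - v)) : v < π (posEmb π v x) :=
  mem_abovePos.1 (orderEmbOfFin_mem _ _ x)

lemma lt_valEmb (y : Fin (N - v)) : v < valEmb v y :=
  mem_Ioi.1 (orderEmbOfFin_mem _ _ y)

variable {π v} in
lemma exists_posEmb_eq {j : Fin (N + 1)} (hj : v < π j) : ∃ x, posEmb π v x = j := by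
  rw [← Set.mem_range, posEmb, range_orderEmbOfFin, mem_coe, mem_abovePos]
  exact hj

variable {v} in
lemma exists_valEmb_eq {w : Fin (N + 1)} (hw : v < w) : ∃ y, valEmb v y = w := by
  rw [← Set.mem_range, valEmb, range_orderEmbOfFin, mem_coe, mem_Ioi]
  exact hw

def liftAbove : Perm (Fin (N - v)) →* Perm (Fin (N + 1)) :=
  Perm.extendDomainHom ((Ioi v).orderIsoOfFin (card_Ioi_eq_sub v)).toEquiv

lemma liftAbove_apply_valEmb (σ : Perm (Fin (N - v))) (y : Fin (N - v)) :
    liftAbove v σ (valEmb v y) = valEmb v (σ y) :=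
  Perm.extendDomain_apply_image _ _ y

lemma liftAbove_apply_self (σ : Perm (Fin (N - v))) : liftAbove v σ v = v :=
  Perm.extendDomain_apply_not_subtype _ _ (by simp)

lemma lt_liftAbove_apply_iff (σ : Perm (Fin (N - v))) {w : Fin (N + 1)} :
    v < liftAbove v σ w ↔ v < w := by
  by_cases hw : v < w
  · obtain ⟨y, rfl⟩ := exists_valEmb_eq hw
    rw [liftAbove_apply_valEmb]
    exact iff_of_true (lt_valEmb v (σ y)) (lt_valEmb v y)
  · rw [liftAbove, Perm.extendDomainHom_apply,
      Perm.extendDomain_apply_not_subtype _ _ (by simpa using hw)]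

lemma restrictAbove_liftAbove_mul (σ : Perm (Fin (N - v))) :
    restrictAbove (liftAbove v σ * π) v = σ * restrictAbove π v := by
  have hpos : posEmb (liftAbove v σ * π) v = posEmb π v := by
    have : abovePos (liftAbove v σ * π) v = abovePos π v := by
      ext j
      simp only [mem_abovePos, Perm.mul_apply, lt_liftAbove_apply_iff]
    simp only [posEmb, this]
  ext x : 1
  apply (valEmb v).injective
  rw [valEmb_restrictAbove, hpos, Perm.mul_apply, Perm.mul_apply, ← valEmb_restrictAbove,
    liftAbove_apply_valEmb]

end RestrictAbove

section Fibers

variable {N : ℕ} (v : Fin (N + 1))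

lemma liftAbove_mul_apply_zero {π : Perm (Fin (N + 1))} (h : π 0 = v)
    (σ : Perm (Fin (N - v))) : (liftAbove v σ * π) 0 = v := by
  rw [Perm.mul_apply, h, liftAbove_apply_self]

lemma card_restrictAbove_preimage (P : Perm (Fin (N - v)) → Prop) :
    Nat.card {π : Perm (Fin (N + 1)) // π 0 = v ∧ P (restrictAbove π v)} =
      Nat.card {σ // P σ} *
        Nat.card {π : Perm (Fin (N + 1)) // π 0 = v ∧ restrictAbove π v = 1} := by
  rw [← Nat.card_prod]
  refine Nat.card_congr
    { toFun := fun π => (⟨restrictAbove π.1 v, π.2.2⟩,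
        ⟨liftAbove v (restrictAbove π.1 v)⁻¹ * π.1, liftAbove_mul_apply_zero v π.2.1 _,
          by rw [restrictAbove_liftAbove_mul, inv_mul_cancel]⟩)
      invFun := fun p => ⟨liftAbove v p.1.1 * p.2.1, liftAbove_mul_apply_zero v p.2.2.1 _,
        by rw [restrictAbove_liftAbove_mul, p.2.2.2, mul_one]; exact p.1.2⟩
      left_inv := fun π => Subtype.ext (by simp [← mul_assoc])
      right_inv := fun p => Prod.ext (Subtype.ext (by simp [restrictAbove_liftAbove_mul, p.2.2.2]))
        (Subtype.ext (by simp [restrictAbove_liftAbove_mul, p.2.2.2, ← mul_assoc])) }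

lemma card_restrictAbove_eq_one_pos :
    0 < Nat.card {π : Perm (Fin (N + 1)) // π 0 = v ∧ restrictAbove π v = 1} := by
  have hρ : swap 0 v 0 = v := swap_apply_left 0 v
  have : Nonempty {π : Perm (Fin (N + 1)) // π 0 = v ∧ restrictAbove π v = 1} :=
    ⟨⟨liftAbove v (restrictAbove (swap 0 v) v)⁻¹ * swap 0 v, liftAbove_mul_apply_zero v hρ _,
      by rw [restrictAbove_liftAbove_mul, inv_mul_cancel]⟩⟩
  exact Nat.card_pos

end Fibers

lemma Nat.card_subtype_eq_sum_fiberwise {α β : Type*} [Fintype α] [Fintype β] [DecidableEq β]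
    (f : α → β) (p : α → Prop) : Nat.card {x // p x} = ∑ b, Nat.card {x // f x = b ∧ p x} := by
  classical
  simp only [Nat.card_eq_fintype_card, Fintype.card_subtype]
  rw [card_eq_sum_card_fiberwise (f := f) (t := univ) fun _ _ => mem_univ _]
  simp only [filter_filter, and_comm]

section FirstEntry

variable {m N : ℕ} {τ : Perm (Fin m)} {C R : Set (ℕ × ℕ)} {π : Perm (Fin (N + 1))}
  {v : Fin (N + 1)}

/- `Perm.decomposeFin.symm (0, τ)` is the pattern `1 ⊕ τ`: a new smallest letter is put in front
of `τ`. -/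
lemma decomposeFin_symm_zero_symm_apply_zero (τ : Perm (Fin m)) :
    (Perm.decomposeFin.symm (0, τ)).symm 0 = 0 := by
  rw [Equiv.symm_apply_eq, Perm.decomposeFin_symm_apply_zero]

lemma decomposeFin_symm_zero_symm_apply_succ (τ : Perm (Fin m)) (a : Fin m) :
    (Perm.decomposeFin.symm (0, τ)).symm a.succ = (τ.symm a).succ := by
  rw [Equiv.symm_apply_eq, Perm.decomposeFin_symm_apply_succ, swap_self, refl_apply,
    apply_symm_apply]

def extendOcc (π : Perm (Fin (N + 1))) (v : Fin (N + 1)) (i : Fin m → Fin (N - v)) :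
    Fin (m + 1) → Fin (N + 1) :=
  Fin.cons 0 (posEmb π v ∘ i)

lemma pos_posEmb (h : π 0 = v) (x : Fin (N - v)) : 0 < posEmb π v x := by
  refine Fin.pos_iff_ne_zero.2 fun h0 => (lt_apply_posEmb π v x).ne' ?_
  rw [h0, h]

lemma apply_extendOcc_symm (h : π 0 = v) (i : Fin m → Fin (N - v)) :
    (fun b => π (extendOcc π v i ((Perm.decomposeFin.symm (0, τ)).symm b))) =
      Fin.cons v (valEmb v ∘ fun b => restrictAbove π v (i (τ.symm b))) := by
  funext b
  induction b using Fin.cases with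
  | zero => simp [decomposeFin_symm_zero_symm_apply_zero, extendOcc, h]
  | succ b => simp [decomposeFin_symm_zero_symm_apply_succ, extendOcc, valEmb_restrictAbove]

lemma exists_cell_extendOcc_iff (h : π 0 = v) (i : Fin m → Fin (N - v)) (a b : ℕ) :
    (∃ j : Fin (N + 1),
        posExt (extendOcc π v i) (a + 1) < j + 1 ∧ j + 1 < posExt (extendOcc π v i) (a + 1 + 1) ∧
        valExt (Perm.decomposeFin.symm (0, τ)) π (extendOcc π v i) (b + 1) < π j + 1 ∧
        π j + 1 < valExt (Perm.decomposeFin.symm (0, τ)) π (extendOcc π v i) (b + 1 + 1)) ↔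
    ∃ x : Fin (N - v),
        posExt i a < x + 1 ∧ x + 1 < posExt i (a + 1) ∧
        valExt τ (restrictAbove π v) i b < restrictAbove π v x + 1 ∧
        restrictAbove π v x + 1 < valExt τ (restrictAbove π v) i (b + 1) := by
  have hpos := (posEmb π v).strictMono
  have hval := (valEmb v).strictMono
  have hv := lt_valEmb v
  simp only [valExt_eq_posExt]
  rw [apply_extendOcc_symm h]
  simp only [extendOcc]
  set w : Fin m → Fin (N - v) := fun b => restrictAbove π v (i (τ.symm b))
  constructor
  · rintro ⟨j, h1, h2, h3, h4⟩
    have hj : v < π j := by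
      have := add_one_le_posExt_cons (f := valEmb v ∘ w) (fun y => hv (w y)) b
      omega
    obtain ⟨x, rfl⟩ := exists_posEmb_eq hj
    rw [← valEmb_restrictAbove] at h3 h4
    exact ⟨x, (posExt_cons_comp_lt_iff hpos (pos_posEmb h) i a x).1 h1,
      (lt_posExt_cons_comp_iff hpos (pos_posEmb h) i (a + 1) x).1 h2,
      (posExt_cons_comp_lt_iff hval hv w b _).1 h3,
      (lt_posExt_cons_comp_iff hval hv w (b + 1) _).1 h4⟩
  · rintro ⟨x, h1, h2, h3, h4⟩
    refine ⟨posEmb π v x, (posExt_cons_comp_lt_iff hpos (pos_posEmb h) i a x).2 h1,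
      (lt_posExt_cons_comp_iff hpos (pos_posEmb h) i (a + 1) x).2 h2, ?_, ?_⟩
    · rw [← valEmb_restrictAbove]
      exact (posExt_cons_comp_lt_iff hval hv w b _).2 h3
    · rw [← valEmb_restrictAbove]
      exact (lt_posExt_cons_comp_iff hval hv w (b + 1) _).2 h4

lemma strictMono_extendOcc_iff (h : π 0 = v) (i : Fin m → Fin (N - v)) :
    StrictMono (extendOcc π v i) ↔ StrictMono i := by
  rw [extendOcc, Fin.strictMono_cons]
  simp only [Function.comp_apply, pos_posEmb h, implies_true, true_and]
  exact ⟨fun hs a b hab => (posEmb π v).lt_iff_lt.1 (hs hab), (posEmb π v).strictMono.comp⟩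

lemma apply_extendOcc_succ (i : Fin m → Fin (N - v)) (a : Fin m) :
    π (extendOcc π v i a.succ) = valEmb v (restrictAbove π v (i a)) := by
  simp [extendOcc, valEmb_restrictAbove]

lemma extendOcc_order_iff (h : π 0 = v) (i : Fin m → Fin (N - v)) :
    (∀ a b, π (extendOcc π v i a) < π (extendOcc π v i b) ↔
        Perm.decomposeFin.symm (0, τ) a < Perm.decomposeFin.symm (0, τ) b) ↔
      ∀ a b, restrictAbove π v (i a) < restrictAbove π v (i b) ↔ τ a < τ b := by
  have h0 : π (extendOcc π v i 0) = v := by simp [extendOcc, h]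
  simp [Fin.forall_fin_succ, h0, apply_extendOcc_succ, lt_valEmb, fun y => (lt_valEmb v y).le,
    Fin.succ_pos]

lemma isMeshOcc_extendOcc_iff (hC : ∀ p ∈ C, p.1 = 0) (h : π 0 = v) (i : Fin m → Fin (N - v)) :
    IsMeshOcc (Perm.decomposeFin.symm (0, τ)) (C ∪ (fun p : ℕ × ℕ => (p.1 + 1, p.2 + 1)) '' R) π
        (extendOcc π v i) ↔ IsMeshOcc τ R (restrictAbove π v) i := by
  refine and_congr (strictMono_extendOcc_iff h i) (and_congr (extendOcc_order_iff h i) ?_)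
  constructor
  · intro H a b hab
    rw [← exists_cell_extendOcc_iff h]
    exact H (a + 1) (b + 1) (Or.inr ⟨(a, b), hab, rfl⟩)
  · rintro H a b (hab | ⟨⟨a, b⟩, hab, heq⟩)
    · obtain rfl : a = 0 := hC _ hab
      rintro ⟨j, -, hj, -⟩
      rw [zero_add, extendOcc, posExt_cons_one] at hj
      simp at hj
    · obtain ⟨rfl, rfl⟩ := Prod.mk.inj heq
      rw [exists_cell_extendOcc_iff h]
      exact H a b hab

lemma occ_decomposeFin_symm_zero (hC₀ : ∀ b ≤ m + 1, (0, b) ∈ C) (hC : ∀ p ∈ C, p.1 = 0)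
    (h : π 0 = v) :
    occ (Perm.decomposeFin.symm (0, τ)) (C ∪ (fun p : ℕ × ℕ => (p.1 + 1, p.2 + 1)) '' R) π =
      occ τ R (restrictAbove π v) := by
  refine (Nat.card_congr (Equiv.ofBijective
    (fun i => ⟨extendOcc π v i.1, (isMeshOcc_extendOcc_iff hC h i.1).2 i.2⟩) ⟨?_, ?_⟩)).symm
  · intro i i' hii'
    exact Subtype.ext ((posEmb π v).injective.comp_left
      (Fin.cons_right_injective (α := fun _ => Fin (N + 1)) 0 (congrArg Subtype.val hii')))
  · rintro ⟨i, hi⟩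
    have hi0 : i 0 = 0 := hi.apply_zero_eq_zero fun b hb => Or.inl (hC₀ b hb)
    have hlt : ∀ a : Fin m, v < π (i a.succ) := fun a => by
      rw [← h, ← hi0, hi.2.1]
      simp [Fin.succ_pos]
    choose x hx using fun a => exists_posEmb_eq (hlt a)
    have hix : extendOcc π v x = i := by
      funext a
      induction a using Fin.cases with
      | zero => simp [extendOcc, hi0]
      | succ a => simp [extendOcc, hx]
    exact ⟨⟨x, (isMeshOcc_extendOcc_iff hC h x).1 (hix ▸ hi)⟩, Subtype.ext hix⟩

end FirstEntry

lemma occ_eq_zero_of_fin_zero {m : ℕ} (τ : Perm (Fin (m + 1))) (S : Set (ℕ × ℕ))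
    (π : Perm (Fin 0)) : occ τ S π = 0 := by
  simp [occ]

noncomputable def jointCount {m₁ m₂ : ℕ} (τ₁ : Perm (Fin m₁)) (R₁ : Set (ℕ × ℕ))
    (τ₂ : Perm (Fin m₂)) (R₂ : Set (ℕ × ℕ)) (n k ℓ : ℕ) : ℕ :=
  Nat.card {π : Perm (Fin n) // occ τ₁ R₁ π = k ∧ occ τ₂ R₂ π = ℓ}

section JointCount

variable {m₁ m₂ : ℕ} {τ₁ : Perm (Fin m₁)} {τ₂ : Perm (Fin m₂)} {C₁ C₂ R₁ R₂ : Set (ℕ × ℕ)}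

lemma jointlyEquidistributed_iff :
    JointlyEquidistributed τ₁ R₁ τ₂ R₂ ↔
      ∀ n k ℓ, jointCount τ₁ R₁ τ₂ R₂ n k ℓ = jointCount τ₁ R₁ τ₂ R₂ n ℓ k :=
  Iff.rfl

lemma jointCount_zero_comm {ρ₁ : Perm (Fin (m₁ + 1))} {ρ₂ : Perm (Fin (m₂ + 1))} (k ℓ : ℕ) :
    jointCount ρ₁ R₁ ρ₂ R₂ 0 k ℓ = jointCount ρ₁ R₁ ρ₂ R₂ 0 ℓ k :=
  Nat.card_congr <| Equiv.subtypeEquivRight fun π => by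
    simp only [occ_eq_zero_of_fin_zero, and_comm]

lemma jointCount_succ (hC₁₀ : ∀ b ≤ m₁ + 1, (0, b) ∈ C₁) (hC₁ : ∀ p ∈ C₁, p.1 = 0)
    (hC₂₀ : ∀ b ≤ m₂ + 1, (0, b) ∈ C₂) (hC₂ : ∀ p ∈ C₂, p.1 = 0) (N k ℓ : ℕ) :
    jointCount (Perm.decomposeFin.symm (0, τ₁)) (C₁ ∪ (fun p : ℕ × ℕ => (p.1 + 1, p.2 + 1)) '' R₁)
        (Perm.decomposeFin.symm (0, τ₂)) (C₂ ∪ (fun p : ℕ × ℕ => (p.1 + 1, p.2 + 1)) '' R₂)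
        (N + 1) k ℓ =
      ∑ v : Fin (N + 1), jointCount τ₁ R₁ τ₂ R₂ (N - v) k ℓ *
        Nat.card {π : Perm (Fin (N + 1)) // π 0 = v ∧ restrictAbove π v = 1} := by
  rw [jointCount, Nat.card_subtype_eq_sum_fiberwise fun π => π 0]
  refine sum_congr rfl fun v _ => ?_
  rw [jointCount, ← card_restrictAbove_preimage]
  refine Nat.card_congr <| Equiv.subtypeEquivRight fun π => and_congr_right fun h => ?_
  rw [occ_decomposeFin_symm_zero hC₁₀ hC₁ h, occ_decomposeFin_symm_zero hC₂₀ hC₂ h]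

theorem jointlyEquidistributed_decomposeFin_iff (hC₁₀ : ∀ b ≤ m₁ + 1, (0, b) ∈ C₁)
    (hC₁ : ∀ p ∈ C₁, p.1 = 0) (hC₂₀ : ∀ b ≤ m₂ + 1, (0, b) ∈ C₂) (hC₂ : ∀ p ∈ C₂, p.1 = 0) :
    JointlyEquidistributed
        (Perm.decomposeFin.symm (0, τ₁)) (C₁ ∪ (fun p : ℕ × ℕ => (p.1 + 1, p.2 + 1)) '' R₁)
        (Perm.decomposeFin.symm (0, τ₂)) (C₂ ∪ (fun p : ℕ × ℕ => (p.1 + 1, p.2 + 1)) '' R₂) ↔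
      JointlyEquidistributed τ₁ R₁ τ₂ R₂ := by
  simp only [jointlyEquidistributed_iff]
  constructor
  · intro hq n
    induction n using Nat.strong_induction_on with
    | _ n ih =>
      intro k ℓ
      have hn := hq (n + 1) k ℓ
      rw [jointCount_succ hC₁₀ hC₁ hC₂₀ hC₂, jointCount_succ hC₁₀ hC₁ hC₂₀ hC₂,
        Fin.sum_univ_succ, Fin.sum_univ_succ] at hn
      simp only [fun v : Fin n => ih (n - v.succ) (Nat.sub_lt v.pos (Fin.succ_pos v)) k ℓ,
        add_left_inj] at hn
      simpa using Nat.eq_of_mul_eq_mul_right (card_restrictAbove_eq_one_pos 0) hn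
  · intro hp n k ℓ
    cases n with
    | zero => exact jointCount_zero_comm k ℓ
    | succ N =>
      rw [jointCount_succ hC₁₀ hC₁ hC₂₀ hC₂, jointCount_succ hC₁₀ hC₁ hC₂₀ hC₂]
      simp only [hp _ k ℓ]

end JointCount

theorem statement_0_general (R : Set (ℕ × ℕ)) :
    JointlyEquidistributed perm123
        (({(0, 0), (0, 1), (0, 2), (0, 3)} : Set (ℕ × ℕ)) ∪
          (fun p : ℕ × ℕ => (p.1 + 1, p.2 + 1)) '' R)
      perm132
        (({(0, 0), (0, 1), (0, 2), (0, 3)} : Set (ℕ × ℕ)) ∪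
          (fun p : ℕ × ℕ => (p.1 + 1, p.2 + 1)) '' R) ↔
    JointlyEquidistributed perm12 R perm21 R := by
  have h123 : perm123 = Perm.decomposeFin.symm (0, perm12) := by decide
  have h132 : perm132 = Perm.decomposeFin.symm (0, perm21) := by decide
  have hC₀ : ∀ b ≤ 2 + 1, ((0, b) : ℕ × ℕ) ∈ ({(0, 0), (0, 1), (0, 2), (0, 3)} : Set (ℕ × ℕ)) := by
    intro b hb
    interval_cases b <;> simp
  have hC : ∀ p ∈ ({(0, 0), (0, 1), (0, 2), (0, 3)} : Set (ℕ × ℕ)), p.1 = 0 := by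
    simp
  rw [h123, h132]
  exact jointlyEquidistributed_decomposeFin_iff hC₀ hC hC₀ hC

theorem statement_0 (R : Set (ℕ × ℕ)) (hR : ∀ p ∈ R, p.1 ≤ 2 ∧ p.2 ≤ 2) :
    JointlyEquidistributed perm123
        (({(0, 0), (0, 1), (0, 2), (0, 3)} : Set (ℕ × ℕ)) ∪
          (fun p : ℕ × ℕ => (p.1 + 1, p.2 + 1)) '' R)
      perm132
        (({(0, 0), (0, 1), (0, 2), (0, 3)} : Set (ℕ × ℕ)) ∪
          (fun p : ℕ × ℕ => (p.1 + 1, p.2 + 1)) '' R) ↔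
    JointlyEquidistributed perm12 R perm21 R :=
  statement_0_general R
end

section
/- Let S = {(0,0),(0,1),(0,2),(0,3),(1,1),(1,2),(1,3),(2,2),(3,2)}. The mesh patterns q1 = (123, S) and q2 = (132, S) are jointly equidistributed. -/
namespace MeshAux

def S0 : Set (ℕ × ℕ) :=
  {(0, 0), (0, 1), (0, 2), (0, 3), (1, 1), (1, 2), (1, 3), (2, 2), (3, 2)}

variable {n : ℕ}

lemma fin3_cases {P : Fin 3 → Prop} (h0 : P 0) (h1 : P 1) (h2 : P 2) : ∀ a, P a := by
  intro a
  match a with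
  | ⟨0, _⟩ => exact h0
  | ⟨1, _⟩ => exact h1
  | ⟨2, _⟩ => exact h2

/-- reversal of the values strictly above `p`. -/
def gmap (n p : ℕ) : Fin n → Fin n := fun v =>
  if h : (v : ℕ) ≤ p then v else ⟨n + p - (v : ℕ), by have := v.isLt; omega⟩

lemma gmap_le {p : ℕ} {v : Fin n} (h : (v : ℕ) ≤ p) : gmap n p v = v := by
  simp [gmap, h]

lemma gmap_gt {p : ℕ} {v : Fin n} (h : p < (v : ℕ)) :
    (gmap n p v : ℕ) = n + p - (v : ℕ) := by
  simp [gmap, Nat.not_le.mpr h]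

lemma gmap_invol (p : ℕ) : Function.Involutive (gmap n p) := by
  intro v
  by_cases h : (v : ℕ) ≤ p
  · rw [gmap_le h, gmap_le h]
  · push_neg at h
    have h1 : (v : ℕ) < n := v.isLt
    have h2 : (gmap n p v : ℕ) = n + p - (v : ℕ) := gmap_gt h
    have h3 : p < (gmap n p v : ℕ) := by omega
    apply Fin.val_injective
    rw [gmap_gt h3, h2]
    omega

def pval (π : Equiv.Perm (Fin n)) : ℕ :=
  if h : 0 < n then ((π ⟨0, h⟩ : Fin n) : ℕ) else 0

def psi (π : Equiv.Perm (Fin n)) : Equiv.Perm (Fin n) :=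
  π.trans ⟨gmap n (pval π), gmap n (pval π),
    (gmap_invol (pval π)).leftInverse, (gmap_invol (pval π)).rightInverse⟩

lemma psi_apply (π : Equiv.Perm (Fin n)) (j : Fin n) :
    psi π j = gmap n (pval π) (π j) := rfl

lemma pval_psi (π : Equiv.Perm (Fin n)) : pval (psi π) = pval π := by
  rcases Nat.eq_zero_or_pos n with h | h
  · subst h; rfl
  · unfold pval
    rw [dif_pos h, dif_pos h, psi_apply, gmap_le]
    rw [pval, dif_pos h]

lemma psi_psi (π : Equiv.Perm (Fin n)) : psi (psi π) = π := by
  apply Equiv.ext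
  intro j
  rw [psi_apply, pval_psi, psi_apply]
  exact gmap_invol (pval π) (π j)

def Q1 (π : Equiv.Perm (Fin n)) (i : Fin 3 → Fin n) : Prop :=
  (i 0 : ℕ) = 0 ∧ i 0 < i 1 ∧ i 1 < i 2 ∧ π (i 0) < π (i 1) ∧
    ((π (i 2)) : ℕ) = (π (i 1) : ℕ) + 1 ∧
    ∀ j : Fin n, 0 < (j : ℕ) → (j : ℕ) < (i 1 : ℕ) → π j < π (i 0)

def Q2 (π : Equiv.Perm (Fin n)) (i : Fin 3 → Fin n) : Prop :=
  (i 0 : ℕ) = 0 ∧ i 0 < i 1 ∧ i 1 < i 2 ∧ π (i 0) < π (i 2) ∧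
    ((π (i 1)) : ℕ) = (π (i 2) : ℕ) + 1 ∧
    ∀ j : Fin n, 0 < (j : ℕ) → (j : ℕ) < (i 1 : ℕ) → π j < π (i 0)

end MeshAux
namespace MeshAux

variable {n : ℕ}

lemma isMeshOcc123_iff (π : Equiv.Perm (Fin n)) (i : Fin 3 → Fin n) :
    IsMeshOcc perm123 S0 π i ↔ Q1 π i := by
  constructor
  · rintro ⟨hsm, hval, hcell⟩
    have hn : 0 < n := (i 0).pos
    have o01 : (π (i 0) : ℕ) < π (i 1) := (hval 0 1).mpr (by decide)
    have o12 : (π (i 1) : ℕ) < π (i 2) := (hval 1 2).mpr (by decide)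
    have i01 : (i 0 : ℕ) < i 1 := hsm (by decide)
    have i12 : (i 1 : ℕ) < i 2 := hsm (by decide)
    have c00 : ¬ ∃ j : Fin n, (0:ℕ) < (j:ℕ)+1 ∧ (j:ℕ)+1 < (i 0:ℕ)+1 ∧
        (0:ℕ) < (π j:ℕ)+1 ∧ (π j:ℕ)+1 < (π (i 0):ℕ)+1 := hcell 0 0 (by simp [S0])
    have c01 : ¬ ∃ j : Fin n, (0:ℕ) < (j:ℕ)+1 ∧ (j:ℕ)+1 < (i 0:ℕ)+1 ∧
        (π (i 0):ℕ)+1 < (π j:ℕ)+1 ∧ (π j:ℕ)+1 < (π (i 1):ℕ)+1 := hcell 0 1 (by simp [S0])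
    have c02 : ¬ ∃ j : Fin n, (0:ℕ) < (j:ℕ)+1 ∧ (j:ℕ)+1 < (i 0:ℕ)+1 ∧
        (π (i 1):ℕ)+1 < (π j:ℕ)+1 ∧ (π j:ℕ)+1 < (π (i 2):ℕ)+1 := hcell 0 2 (by simp [S0])
    have c03 : ¬ ∃ j : Fin n, (0:ℕ) < (j:ℕ)+1 ∧ (j:ℕ)+1 < (i 0:ℕ)+1 ∧
        (π (i 2):ℕ)+1 < (π j:ℕ)+1 ∧ (π j:ℕ)+1 < n+1 := hcell 0 3 (by simp [S0])
    have c11 : ¬ ∃ j : Fin n, (i 0:ℕ)+1 < (j:ℕ)+1 ∧ (j:ℕ)+1 < (i 1:ℕ)+1 ∧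
        (π (i 0):ℕ)+1 < (π j:ℕ)+1 ∧ (π j:ℕ)+1 < (π (i 1):ℕ)+1 := hcell 1 1 (by simp [S0])
    have c12 : ¬ ∃ j : Fin n, (i 0:ℕ)+1 < (j:ℕ)+1 ∧ (j:ℕ)+1 < (i 1:ℕ)+1 ∧
        (π (i 1):ℕ)+1 < (π j:ℕ)+1 ∧ (π j:ℕ)+1 < (π (i 2):ℕ)+1 := hcell 1 2 (by simp [S0])
    have c13 : ¬ ∃ j : Fin n, (i 0:ℕ)+1 < (j:ℕ)+1 ∧ (j:ℕ)+1 < (i 1:ℕ)+1 ∧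
        (π (i 2):ℕ)+1 < (π j:ℕ)+1 ∧ (π j:ℕ)+1 < n+1 := hcell 1 3 (by simp [S0])
    have c22 : ¬ ∃ j : Fin n, (i 1:ℕ)+1 < (j:ℕ)+1 ∧ (j:ℕ)+1 < (i 2:ℕ)+1 ∧
        (π (i 1):ℕ)+1 < (π j:ℕ)+1 ∧ (π j:ℕ)+1 < (π (i 2):ℕ)+1 := hcell 2 2 (by simp [S0])
    have c32 : ¬ ∃ j : Fin n, (i 2:ℕ)+1 < (j:ℕ)+1 ∧ (j:ℕ)+1 < n+1 ∧
        (π (i 1):ℕ)+1 < (π j:ℕ)+1 ∧ (π j:ℕ)+1 < (π (i 2):ℕ)+1 := hcell 3 2 (by simp [S0])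
    have hi0 : (i 0 : ℕ) = 0 := by
      by_contra h0
      set z : Fin n := ⟨0, hn⟩ with hz
      have hzval : (z : ℕ) = 0 := rfl
      have hne : ∀ a : Fin 3, (π z : ℕ) ≠ (π (i a) : ℕ) := by
        intro a hh
        have hz2 : z = i a := π.injective (Fin.val_injective hh)
        have h3 : (i a : ℕ) = 0 := by rw [← hz2]
        have h4 : i 0 ≤ i a := hsm.monotone (Fin.zero_le a)
        rw [Fin.le_def] at h4
        omega
      have hv0 := hne 0
      have hv1 := hne 1
      have hv2 := hne 2
      have hlt : (π z : ℕ) < n := (π z).isLt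
      by_cases hA : (π z : ℕ) < (π (i 0) : ℕ)
      · exact c00 ⟨z, by omega, by omega, by omega, by omega⟩
      by_cases hB : (π z : ℕ) < (π (i 1) : ℕ)
      · exact c01 ⟨z, by omega, by omega, by omega, by omega⟩
      by_cases hC : (π z : ℕ) < (π (i 2) : ℕ)
      · exact c02 ⟨z, by omega, by omega, by omega, by omega⟩
      · exact c03 ⟨z, by omega, by omega, by omega, by omega⟩
    have hcons : (π (i 2) : ℕ) = (π (i 1) : ℕ) + 1 := by
      by_contra hc
      have hw : (π (i 1) : ℕ) + 1 < n := by
        have := (π (i 2)).isLt; omega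
      set w : Fin n := ⟨(π (i 1) : ℕ) + 1, by omega⟩ with hwdef
      set j : Fin n := π.symm w with hjdef
      have hwv : (π j : ℕ) = (π (i 1) : ℕ) + 1 := by
        rw [hjdef, Equiv.apply_symm_apply]
      have key : ∀ a : Fin 3, (j : ℕ) = (i a : ℕ) → (π (i a) : ℕ) = (π (i 1) : ℕ) + 1 := by
        intro a hh
        rw [← hwv]
        exact congrArg (fun t => ((π t : Fin n) : ℕ)) (Fin.val_injective hh).symm
      have h0 : (j : ℕ) ≠ (i 0 : ℕ) := fun hh => by have := key 0 hh; omega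
      have h1 : (j : ℕ) ≠ (i 1 : ℕ) := fun hh => by have := key 1 hh; omega
      have h2 : (j : ℕ) ≠ (i 2 : ℕ) := fun hh => by have := key 2 hh; omega
      have hjlt : (j : ℕ) < n := j.isLt
      by_cases hA : (j : ℕ) < (i 1 : ℕ)
      · exact c12 ⟨j, by omega, by omega, by omega, by omega⟩
      by_cases hB : (j : ℕ) < (i 2 : ℕ)
      · exact c22 ⟨j, by omega, by omega, by omega, by omega⟩
      · exact c32 ⟨j, by omega, by omega, by omega, by omega⟩
    refine ⟨hi0, hsm (by decide), hsm (by decide), (hval 0 1).mpr (by decide), hcons, ?_⟩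
    intro j hj0 hj1
    rw [Fin.lt_def]
    by_contra hge
    push_neg at hge
    have hvne : ∀ a : Fin 3, (j : ℕ) ≠ (i a : ℕ) → (π j : ℕ) ≠ (π (i a) : ℕ) :=
      fun a hja hh => hja (congrArg Fin.val (π.injective (Fin.val_injective hh)))
    have hv0 := hvne 0 (by omega)
    have hv1 := hvne 1 (by omega)
    have hv2 := hvne 2 (by omega)
    have hlt : (π j : ℕ) < n := (π j).isLt
    by_cases hB : (π j : ℕ) < (π (i 1) : ℕ)
    · exact c11 ⟨j, by omega, by omega, by omega, by omega⟩
    by_cases hC : (π j : ℕ) < (π (i 2) : ℕ)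
    · exact c12 ⟨j, by omega, by omega, by omega, by omega⟩
    · exact c13 ⟨j, by omega, by omega, by omega, by omega⟩
  · rintro ⟨hi0, h01, h12, hp, hc, hpre⟩
    have hp' : (π (i 0) : ℕ) < (π (i 1) : ℕ) := hp
    have h01' : (i 0 : ℕ) < (i 1 : ℕ) := h01
    have h12' : (i 1 : ℕ) < (i 2 : ℕ) := h12
    have hF12 : π (i 1) < π (i 2) := by rw [Fin.lt_def]; omega
    have hF02 : π (i 0) < π (i 2) := by rw [Fin.lt_def]; omega
    refine ⟨?_, ?_, ?_⟩
    · intro a b hab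
      revert hab
      revert b
      refine fin3_cases (P := fun a => ∀ b, a < b → i a < i b) ?_ ?_ ?_ a <;>
        refine fin3_cases ?_ ?_ ?_
      · exact fun hab => absurd hab (by decide)
      · exact fun _ => h01
      · exact fun _ => h01.trans h12
      · exact fun hab => absurd hab (by decide)
      · exact fun hab => absurd hab (by decide)
      · exact fun _ => h12
      · exact fun hab => absurd hab (by decide)
      · exact fun hab => absurd hab (by decide)
      · exact fun hab => absurd hab (by decide)
    · intro a b
      revert b
      refine fin3_cases (P := fun a => ∀ b, (π (i a) < π (i b) ↔ perm123 a < perm123 b))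
        ?_ ?_ ?_ a <;> refine fin3_cases ?_ ?_ ?_
      · exact iff_of_false (lt_irrefl _) (by decide)
      · exact iff_of_true hp (by decide)
      · exact iff_of_true hF02 (by decide)
      · exact iff_of_false hp.asymm (by decide)
      · exact iff_of_false (lt_irrefl _) (by decide)
      · exact iff_of_true hF12 (by decide)
      · exact iff_of_false hF02.asymm (by decide)
      · exact iff_of_false hF12.asymm (by decide)
      · exact iff_of_false (lt_irrefl _) (by decide)
    · intro a b hab
      simp only [S0, Set.mem_insert_iff, Set.mem_singleton_iff, Prod.mk.injEq] at hab
      rcases hab with ⟨rfl, rfl⟩ | ⟨rfl, rfl⟩ | ⟨rfl, rfl⟩ | ⟨rfl, rfl⟩ | ⟨rfl, rfl⟩ |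
        ⟨rfl, rfl⟩ | ⟨rfl, rfl⟩ | ⟨rfl, rfl⟩ | ⟨rfl, rfl⟩
      · rintro ⟨j, hj1, hj2, hj3, hj4⟩
        have hj2' : (j : ℕ) + 1 < (i 0 : ℕ) + 1 := hj2
        omega
      · rintro ⟨j, hj1, hj2, hj3, hj4⟩
        have hj2' : (j : ℕ) + 1 < (i 0 : ℕ) + 1 := hj2
        omega
      · rintro ⟨j, hj1, hj2, hj3, hj4⟩
        have hj2' : (j : ℕ) + 1 < (i 0 : ℕ) + 1 := hj2
        omega
      · rintro ⟨j, hj1, hj2, hj3, hj4⟩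
        have hj2' : (j : ℕ) + 1 < (i 0 : ℕ) + 1 := hj2
        omega
      · rintro ⟨j, hj1, hj2, hj3, hj4⟩
        have hj1' : (i 0 : ℕ) + 1 < (j : ℕ) + 1 := hj1
        have hj2' : (j : ℕ) + 1 < (i 1 : ℕ) + 1 := hj2
        have hj3' : (π (i 0) : ℕ) + 1 < (π j : ℕ) + 1 := hj3
        have hx : (π j : ℕ) < (π (i 0) : ℕ) := hpre j (by omega) (by omega)
        omega
      · rintro ⟨j, hj1, hj2, hj3, hj4⟩
        have hj1' : (i 0 : ℕ) + 1 < (j : ℕ) + 1 := hj1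
        have hj2' : (j : ℕ) + 1 < (i 1 : ℕ) + 1 := hj2
        have hj3' : (π (i 1) : ℕ) + 1 < (π j : ℕ) + 1 := hj3
        have hx : (π j : ℕ) < (π (i 0) : ℕ) := hpre j (by omega) (by omega)
        omega
      · rintro ⟨j, hj1, hj2, hj3, hj4⟩
        have hj1' : (i 0 : ℕ) + 1 < (j : ℕ) + 1 := hj1
        have hj2' : (j : ℕ) + 1 < (i 1 : ℕ) + 1 := hj2
        have hj3' : (π (i 2) : ℕ) + 1 < (π j : ℕ) + 1 := hj3
        have hx : (π j : ℕ) < (π (i 0) : ℕ) := hpre j (by omega) (by omega)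
        omega
      · rintro ⟨j, hj1, hj2, hj3, hj4⟩
        have hj3' : (π (i 1) : ℕ) + 1 < (π j : ℕ) + 1 := hj3
        have hj4' : (π j : ℕ) + 1 < (π (i 2) : ℕ) + 1 := hj4
        omega
      · rintro ⟨j, hj1, hj2, hj3, hj4⟩
        have hj3' : (π (i 1) : ℕ) + 1 < (π j : ℕ) + 1 := hj3
        have hj4' : (π j : ℕ) + 1 < (π (i 2) : ℕ) + 1 := hj4
        omega

end MeshAux
namespace MeshAux

variable {n : ℕ}

lemma isMeshOcc132_iff (π : Equiv.Perm (Fin n)) (i : Fin 3 → Fin n) :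
    IsMeshOcc perm132 S0 π i ↔ Q2 π i := by
  constructor
  · rintro ⟨hsm, hval, hcell⟩
    have hn : 0 < n := (i 0).pos
    have o02 : (π (i 0) : ℕ) < π (i 2) := (hval 0 2).mpr (by decide)
    have o21 : (π (i 2) : ℕ) < π (i 1) := (hval 2 1).mpr (by decide)
    have i01 : (i 0 : ℕ) < i 1 := hsm (by decide)
    have i12 : (i 1 : ℕ) < i 2 := hsm (by decide)
    have c00 : ¬ ∃ j : Fin n, (0:ℕ) < (j:ℕ)+1 ∧ (j:ℕ)+1 < (i 0:ℕ)+1 ∧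
        (0:ℕ) < (π j:ℕ)+1 ∧ (π j:ℕ)+1 < (π (i 0):ℕ)+1 := hcell 0 0 (by simp [S0])
    have c01 : ¬ ∃ j : Fin n, (0:ℕ) < (j:ℕ)+1 ∧ (j:ℕ)+1 < (i 0:ℕ)+1 ∧
        (π (i 0):ℕ)+1 < (π j:ℕ)+1 ∧ (π j:ℕ)+1 < (π (i 2):ℕ)+1 := hcell 0 1 (by simp [S0])
    have c02 : ¬ ∃ j : Fin n, (0:ℕ) < (j:ℕ)+1 ∧ (j:ℕ)+1 < (i 0:ℕ)+1 ∧
        (π (i 2):ℕ)+1 < (π j:ℕ)+1 ∧ (π j:ℕ)+1 < (π (i 1):ℕ)+1 := hcell 0 2 (by simp [S0])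
    have c03 : ¬ ∃ j : Fin n, (0:ℕ) < (j:ℕ)+1 ∧ (j:ℕ)+1 < (i 0:ℕ)+1 ∧
        (π (i 1):ℕ)+1 < (π j:ℕ)+1 ∧ (π j:ℕ)+1 < n+1 := hcell 0 3 (by simp [S0])
    have c11 : ¬ ∃ j : Fin n, (i 0:ℕ)+1 < (j:ℕ)+1 ∧ (j:ℕ)+1 < (i 1:ℕ)+1 ∧
        (π (i 0):ℕ)+1 < (π j:ℕ)+1 ∧ (π j:ℕ)+1 < (π (i 2):ℕ)+1 := hcell 1 1 (by simp [S0])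
    have c12 : ¬ ∃ j : Fin n, (i 0:ℕ)+1 < (j:ℕ)+1 ∧ (j:ℕ)+1 < (i 1:ℕ)+1 ∧
        (π (i 2):ℕ)+1 < (π j:ℕ)+1 ∧ (π j:ℕ)+1 < (π (i 1):ℕ)+1 := hcell 1 2 (by simp [S0])
    have c13 : ¬ ∃ j : Fin n, (i 0:ℕ)+1 < (j:ℕ)+1 ∧ (j:ℕ)+1 < (i 1:ℕ)+1 ∧
        (π (i 1):ℕ)+1 < (π j:ℕ)+1 ∧ (π j:ℕ)+1 < n+1 := hcell 1 3 (by simp [S0])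
    have c22 : ¬ ∃ j : Fin n, (i 1:ℕ)+1 < (j:ℕ)+1 ∧ (j:ℕ)+1 < (i 2:ℕ)+1 ∧
        (π (i 2):ℕ)+1 < (π j:ℕ)+1 ∧ (π j:ℕ)+1 < (π (i 1):ℕ)+1 := hcell 2 2 (by simp [S0])
    have c32 : ¬ ∃ j : Fin n, (i 2:ℕ)+1 < (j:ℕ)+1 ∧ (j:ℕ)+1 < n+1 ∧
        (π (i 2):ℕ)+1 < (π j:ℕ)+1 ∧ (π j:ℕ)+1 < (π (i 1):ℕ)+1 := hcell 3 2 (by simp [S0])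
    have hi0 : (i 0 : ℕ) = 0 := by
      by_contra h0
      set z : Fin n := ⟨0, hn⟩ with hz
      have hzval : (z : ℕ) = 0 := rfl
      have hne : ∀ a : Fin 3, (π z : ℕ) ≠ (π (i a) : ℕ) := by
        intro a hh
        have hz2 : z = i a := π.injective (Fin.val_injective hh)
        have h3 : (i a : ℕ) = 0 := by rw [← hz2]
        have h4 : i 0 ≤ i a := hsm.monotone (Fin.zero_le a)
        rw [Fin.le_def] at h4
        omega
      have hv0 := hne 0
      have hv1 := hne 1
      have hv2 := hne 2
      have hlt : (π z : ℕ) < n := (π z).isLt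
      by_cases hA : (π z : ℕ) < (π (i 0) : ℕ)
      · exact c00 ⟨z, by omega, by omega, by omega, by omega⟩
      by_cases hB : (π z : ℕ) < (π (i 2) : ℕ)
      · exact c01 ⟨z, by omega, by omega, by omega, by omega⟩
      by_cases hC : (π z : ℕ) < (π (i 1) : ℕ)
      · exact c02 ⟨z, by omega, by omega, by omega, by omega⟩
      · exact c03 ⟨z, by omega, by omega, by omega, by omega⟩
    have hcons : (π (i 1) : ℕ) = (π (i 2) : ℕ) + 1 := by
      by_contra hc
      have hw : (π (i 2) : ℕ) + 1 < n := by
        have := (π (i 1)).isLt; omega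
      set w : Fin n := ⟨(π (i 2) : ℕ) + 1, by omega⟩ with hwdef
      set j : Fin n := π.symm w with hjdef
      have hwv : (π j : ℕ) = (π (i 2) : ℕ) + 1 := by
        rw [hjdef, Equiv.apply_symm_apply]
      have key : ∀ a : Fin 3, (j : ℕ) = (i a : ℕ) → (π (i a) : ℕ) = (π (i 2) : ℕ) + 1 := by
        intro a hh
        rw [← hwv]
        exact congrArg (fun t => ((π t : Fin n) : ℕ)) (Fin.val_injective hh).symm
      have h0 : (j : ℕ) ≠ (i 0 : ℕ) := fun hh => by have := key 0 hh; omega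
      have h1 : (j : ℕ) ≠ (i 1 : ℕ) := fun hh => by have := key 1 hh; omega
      have h2 : (j : ℕ) ≠ (i 2 : ℕ) := fun hh => by have := key 2 hh; omega
      have hjlt : (j : ℕ) < n := j.isLt
      by_cases hA : (j : ℕ) < (i 1 : ℕ)
      · exact c12 ⟨j, by omega, by omega, by omega, by omega⟩
      by_cases hB : (j : ℕ) < (i 2 : ℕ)
      · exact c22 ⟨j, by omega, by omega, by omega, by omega⟩
      · exact c32 ⟨j, by omega, by omega, by omega, by omega⟩
    refine ⟨hi0, hsm (by decide), hsm (by decide), (hval 0 2).mpr (by decide), hcons, ?_⟩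
    intro j hj0 hj1
    rw [Fin.lt_def]
    by_contra hge
    push_neg at hge
    have hvne : ∀ a : Fin 3, (j : ℕ) ≠ (i a : ℕ) → (π j : ℕ) ≠ (π (i a) : ℕ) :=
      fun a hja hh => hja (congrArg Fin.val (π.injective (Fin.val_injective hh)))
    have hv0 := hvne 0 (by omega)
    have hv1 := hvne 1 (by omega)
    have hv2 := hvne 2 (by omega)
    have hlt : (π j : ℕ) < n := (π j).isLt
    by_cases hB : (π j : ℕ) < (π (i 2) : ℕ)
    · exact c11 ⟨j, by omega, by omega, by omega, by omega⟩
    by_cases hC : (π j : ℕ) < (π (i 1) : ℕ)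
    · exact c12 ⟨j, by omega, by omega, by omega, by omega⟩
    · exact c13 ⟨j, by omega, by omega, by omega, by omega⟩
  · rintro ⟨hi0, h01, h12, hp, hc, hpre⟩
    have hp' : (π (i 0) : ℕ) < (π (i 2) : ℕ) := hp
    have h01' : (i 0 : ℕ) < (i 1 : ℕ) := h01
    have h12' : (i 1 : ℕ) < (i 2 : ℕ) := h12
    have hF21 : π (i 2) < π (i 1) := by rw [Fin.lt_def]; omega
    have hF01 : π (i 0) < π (i 1) := by rw [Fin.lt_def]; omega
    refine ⟨?_, ?_, ?_⟩
    · intro a b hab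
      revert hab
      revert b
      refine fin3_cases (P := fun a => ∀ b, a < b → i a < i b) ?_ ?_ ?_ a <;>
        refine fin3_cases ?_ ?_ ?_
      · exact fun hab => absurd hab (by decide)
      · exact fun _ => h01
      · exact fun _ => h01.trans h12
      · exact fun hab => absurd hab (by decide)
      · exact fun hab => absurd hab (by decide)
      · exact fun _ => h12
      · exact fun hab => absurd hab (by decide)
      · exact fun hab => absurd hab (by decide)
      · exact fun hab => absurd hab (by decide)
    · intro a b
      revert b
      refine fin3_cases (P := fun a => ∀ b, (π (i a) < π (i b) ↔ perm132 a < perm132 b))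
        ?_ ?_ ?_ a <;> refine fin3_cases ?_ ?_ ?_
      · exact iff_of_false (lt_irrefl _) (by decide)
      · exact iff_of_true hF01 (by decide)
      · exact iff_of_true hp (by decide)
      · exact iff_of_false hF01.asymm (by decide)
      · exact iff_of_false (lt_irrefl _) (by decide)
      · exact iff_of_false hF21.asymm (by decide)
      · exact iff_of_false hp.asymm (by decide)
      · exact iff_of_true hF21 (by decide)
      · exact iff_of_false (lt_irrefl _) (by decide)
    · intro a b hab
      simp only [S0, Set.mem_insert_iff, Set.mem_singleton_iff, Prod.mk.injEq] at hab
      rcases hab with ⟨rfl, rfl⟩ | ⟨rfl, rfl⟩ | ⟨rfl, rfl⟩ | ⟨rfl, rfl⟩ | ⟨rfl, rfl⟩ |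
        ⟨rfl, rfl⟩ | ⟨rfl, rfl⟩ | ⟨rfl, rfl⟩ | ⟨rfl, rfl⟩
      · rintro ⟨j, hj1, hj2, hj3, hj4⟩
        have hj2' : (j : ℕ) + 1 < (i 0 : ℕ) + 1 := hj2
        omega
      · rintro ⟨j, hj1, hj2, hj3, hj4⟩
        have hj2' : (j : ℕ) + 1 < (i 0 : ℕ) + 1 := hj2
        omega
      · rintro ⟨j, hj1, hj2, hj3, hj4⟩
        have hj2' : (j : ℕ) + 1 < (i 0 : ℕ) + 1 := hj2
        omega
      · rintro ⟨j, hj1, hj2, hj3, hj4⟩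
        have hj2' : (j : ℕ) + 1 < (i 0 : ℕ) + 1 := hj2
        omega
      · rintro ⟨j, hj1, hj2, hj3, hj4⟩
        have hj1' : (i 0 : ℕ) + 1 < (j : ℕ) + 1 := hj1
        have hj2' : (j : ℕ) + 1 < (i 1 : ℕ) + 1 := hj2
        have hj3' : (π (i 0) : ℕ) + 1 < (π j : ℕ) + 1 := hj3
        have hx : (π j : ℕ) < (π (i 0) : ℕ) := hpre j (by omega) (by omega)
        omega
      · rintro ⟨j, hj1, hj2, hj3, hj4⟩
        have hj1' : (i 0 : ℕ) + 1 < (j : ℕ) + 1 := hj1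
        have hj2' : (j : ℕ) + 1 < (i 1 : ℕ) + 1 := hj2
        have hj3' : (π (i 2) : ℕ) + 1 < (π j : ℕ) + 1 := hj3
        have hx : (π j : ℕ) < (π (i 0) : ℕ) := hpre j (by omega) (by omega)
        omega
      · rintro ⟨j, hj1, hj2, hj3, hj4⟩
        have hj1' : (i 0 : ℕ) + 1 < (j : ℕ) + 1 := hj1
        have hj2' : (j : ℕ) + 1 < (i 1 : ℕ) + 1 := hj2
        have hj3' : (π (i 1) : ℕ) + 1 < (π j : ℕ) + 1 := hj3
        have hx : (π j : ℕ) < (π (i 0) : ℕ) := hpre j (by omega) (by omega)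
        omega
      · rintro ⟨j, hj1, hj2, hj3, hj4⟩
        have hj3' : (π (i 2) : ℕ) + 1 < (π j : ℕ) + 1 := hj3
        have hj4' : (π j : ℕ) + 1 < (π (i 1) : ℕ) + 1 := hj4
        omega
      · rintro ⟨j, hj1, hj2, hj3, hj4⟩
        have hj3' : (π (i 2) : ℕ) + 1 < (π j : ℕ) + 1 := hj3
        have hj4' : (π j : ℕ) + 1 < (π (i 1) : ℕ) + 1 := hj4
        omega

end MeshAux

namespace MeshAux

variable {n : ℕ}

lemma Q1_to_Q2 (π : Equiv.Perm (Fin n)) (i : Fin 3 → Fin n) (h : Q1 π i) :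
    Q2 (psi π) i := by
  obtain ⟨hi0, h01, h12, hp, hc, hpre⟩ := h
  have hn : 0 < n := (i 0).pos
  have hi0' : i 0 = ⟨0, hn⟩ := Fin.val_injective hi0
  have hpv : pval π = (π (i 0) : ℕ) := by
    rw [pval, dif_pos hn, hi0']
  have hp' : (π (i 0) : ℕ) < (π (i 1) : ℕ) := hp
  have h2lt : (π (i 2) : ℕ) < n := (π (i 2)).isLt
  have e0 : psi π (i 0) = π (i 0) := by
    rw [psi_apply]; exact gmap_le (le_of_eq hpv.symm)
  have e1 : (psi π (i 1) : ℕ) = n + pval π - (π (i 1) : ℕ) := by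
    rw [psi_apply]; exact gmap_gt (by rw [hpv]; omega)
  have e2 : (psi π (i 2) : ℕ) = n + pval π - (π (i 2) : ℕ) := by
    rw [psi_apply]; exact gmap_gt (by rw [hpv]; omega)
  refine ⟨hi0, h01, h12, ?_, ?_, ?_⟩
  · rw [e0, Fin.lt_def, e2, hpv]
    omega
  · rw [e1, e2, hpv]
    omega
  · intro j hj0 hj1
    have hpj : (π j : ℕ) < (π (i 0) : ℕ) := hpre j hj0 hj1
    have ej : psi π j = π j := by
      rw [psi_apply]; exact gmap_le (by rw [hpv]; omega)
    rw [ej, e0]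
    exact hpre j hj0 hj1

lemma Q2_to_Q1 (π : Equiv.Perm (Fin n)) (i : Fin 3 → Fin n) (h : Q2 π i) :
    Q1 (psi π) i := by
  obtain ⟨hi0, h01, h12, hp, hc, hpre⟩ := h
  have hn : 0 < n := (i 0).pos
  have hi0' : i 0 = ⟨0, hn⟩ := Fin.val_injective hi0
  have hpv : pval π = (π (i 0) : ℕ) := by
    rw [pval, dif_pos hn, hi0']
  have hp' : (π (i 0) : ℕ) < (π (i 2) : ℕ) := hp
  have h1lt : (π (i 1) : ℕ) < n := (π (i 1)).isLt
  have e0 : psi π (i 0) = π (i 0) := by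
    rw [psi_apply]; exact gmap_le (le_of_eq hpv.symm)
  have e1 : (psi π (i 1) : ℕ) = n + pval π - (π (i 1) : ℕ) := by
    rw [psi_apply]; exact gmap_gt (by rw [hpv]; omega)
  have e2 : (psi π (i 2) : ℕ) = n + pval π - (π (i 2) : ℕ) := by
    rw [psi_apply]; exact gmap_gt (by rw [hpv]; omega)
  refine ⟨hi0, h01, h12, ?_, ?_, ?_⟩
  · rw [e0, Fin.lt_def, e1, hpv]
    omega
  · rw [e1, e2, hpv]
    omega
  · intro j hj0 hj1
    have hpj : (π j : ℕ) < (π (i 0) : ℕ) := hpre j hj0 hj1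
    have ej : psi π j = π j := by
      rw [psi_apply]; exact gmap_le (by rw [hpv]; omega)
    rw [ej, e0]
    exact hpre j hj0 hj1

lemma Q1_iff (π : Equiv.Perm (Fin n)) (i : Fin 3 → Fin n) : Q1 π i ↔ Q2 (psi π) i :=
  ⟨Q1_to_Q2 π i, fun h => by
    have := Q2_to_Q1 (psi π) i h
    rwa [psi_psi] at this⟩

lemma Q2_iff (π : Equiv.Perm (Fin n)) (i : Fin 3 → Fin n) : Q2 π i ↔ Q1 (psi π) i :=
  ⟨Q2_to_Q1 π i, fun h => by
    have := Q1_to_Q2 (psi π) i h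
    rwa [psi_psi] at this⟩

lemma occ123_psi (π : Equiv.Perm (Fin n)) : occ perm123 S0 π = occ perm132 S0 (psi π) :=
  Nat.card_congr (Equiv.subtypeEquivRight fun i => by
    rw [isMeshOcc123_iff, isMeshOcc132_iff]; exact Q1_iff π i)

lemma occ132_psi (π : Equiv.Perm (Fin n)) : occ perm132 S0 π = occ perm123 S0 (psi π) :=
  Nat.card_congr (Equiv.subtypeEquivRight fun i => by
    rw [isMeshOcc123_iff, isMeshOcc132_iff]; exact Q2_iff π i)

end MeshAux

theorem statement_1 :
    JointlyEquidistributed perm123 ({(0, 0), (0, 1), (0, 2), (0, 3), (1, 1), (1, 2), (1, 3), (2, 2), (3, 2)} : Set (ℕ × ℕ))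
      perm132 ({(0, 0), (0, 1), (0, 2), (0, 3), (1, 1), (1, 2), (1, 3), (2, 2), (3, 2)} : Set (ℕ × ℕ)) := by
  intro n k ℓ
  apply Nat.card_congr
  refine ⟨fun x => ⟨MeshAux.psi x.1, ?_, ?_⟩, fun x => ⟨MeshAux.psi x.1, ?_, ?_⟩, ?_, ?_⟩
  · show occ perm123 MeshAux.S0 (MeshAux.psi x.1) = ℓ
    rw [← MeshAux.occ132_psi]
    exact x.2.2
  · show occ perm132 MeshAux.S0 (MeshAux.psi x.1) = k
    rw [← MeshAux.occ123_psi]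
    exact x.2.1
  · show occ perm123 MeshAux.S0 (MeshAux.psi x.1) = k
    rw [← MeshAux.occ132_psi]
    exact x.2.2
  · show occ perm132 MeshAux.S0 (MeshAux.psi x.1) = ℓ
    rw [← MeshAux.occ123_psi]
    exact x.2.1
  · intro x
    exact Subtype.ext (MeshAux.psi_psi x.1)
  · intro x
    exact Subtype.ext (MeshAux.psi_psi x.1)
end

section
/- Let S = {(0,0),(0,1),(0,2),(0,3),(2,1),(2,2),(3,1),(3,2)}. The mesh patterns q1 = (123, S) and q2 = (132, S) are jointly equidistributed. -/
/-!
Write `x = π 1`. The shaded first column forces every occurrence of either pattern to start at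
position 1, and an occurrence is then determined by its largest value `c > x`: for `123` the
admissible `c` are those such that some value lies in `(x, c)` and all such values precede `c`,
for `132` those such that exactly one value of `(x, c)` follows `c`. Let `σ` list, in increasing
order of value, the relative positions of the values above `x`. Then `occ q1 π` counts the
entries `0` of the inversion table of `σ` (number of earlier larger entries), the first one
excepted, and `occ q2 π` counts its entries `1`. Inserting a last entry shows that inversion
tables are arbitrary sequences with `j`-th entry at most `j`, so exchanging `0` and `1` in every
entry is an involution of `S_M` that swaps the two counts; rearranging the values above `x`
according to the new pattern gives an involution of `S_n` that swaps `occ q1` and `occ q2`.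
-/

open Equiv Finset

lemma lt_iff_lt_iff_strictMono_comp_symm {m : ℕ} {α : Type*} [LinearOrder α] (τ : Perm (Fin m))
    (f : Fin m → α) : (∀ a b, f a < f b ↔ τ a < τ b) ↔ StrictMono (f ∘ τ.symm) := by
  refine ⟨fun h a b hab => (h _ _).2 (by simpa using hab), fun h a b => ?_⟩
  simpa using h.lt_iff_lt (a := τ a) (b := τ b)

lemma occ_of_fin_zero {m : ℕ} (τ : Perm (Fin (m + 1))) (R : Set (ℕ × ℕ)) (π : Perm (Fin 0)) :
    occ τ R π = 0 :=
  @Nat.card_of_isEmpty _ ⟨fun i => (i.1 0).elim0⟩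

lemma occ_eq_card_of_bijective {m n : ℕ} {τ : Perm (Fin m)} {R : Set (ℕ × ℕ)} {π : Perm (Fin n)}
    (f : (Fin m → Fin n) → Fin n) (s : Finset (Fin n))
    (hmaps : ∀ i, IsMeshOcc τ R π i → f i ∈ s)
    (hinj : ∀ i i', IsMeshOcc τ R π i → IsMeshOcc τ R π i' → f i = f i' → i = i')
    (hsurj : ∀ c ∈ s, ∃ i, IsMeshOcc τ R π i ∧ f i = c) :
    occ τ R π = #s := by
  classical
  rw [occ, Nat.card_eq_fintype_card, Fintype.card_subtype]
  refine card_nbij f (fun i hi => hmaps i (mem_filter.1 hi).2)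
    (fun i hi i' hi' => hinj i i' (mem_filter.1 hi).2 (mem_filter.1 hi').2) fun c hc => ?_
  obtain ⟨i, hi, rfl⟩ := hsurj c hc
  exact ⟨i, mem_filter.2 ⟨mem_univ _, hi⟩, rfl⟩

lemma jointlyEquidistributed_of_involutive {m₁ m₂ : ℕ} {τ₁ : Perm (Fin m₁)} {R₁ : Set (ℕ × ℕ)}
    {τ₂ : Perm (Fin m₂)} {R₂ : Set (ℕ × ℕ)}
    (h : ∀ n, ∃ f : Perm (Fin n) → Perm (Fin n),
      Function.Involutive f ∧ ∀ π, occ τ₁ R₁ (f π) = occ τ₂ R₂ π) :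
    JointlyEquidistributed τ₁ R₁ τ₂ R₂ := by
  intro n k ℓ
  obtain ⟨f, hf, hocc⟩ := h n
  refine Nat.card_congr ((hf.toPerm f).subtypeEquiv fun π => ?_)
  have h₂ := hocc (f π)
  rw [hf π] at h₂
  rw [Function.Involutive.coe_toPerm, hocc, ← h₂, and_comm]

section InversionTable

variable {M : ℕ}

def invCount (σ : Perm (Fin M)) (j : Fin M) : ℕ := #{i | i < j ∧ σ j < σ i}

def invCountStat (σ : Perm (Fin M)) (k : ℕ) : ℕ := #{j : Fin M | 0 < (j : ℕ) ∧ invCount σ j = k}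

def insertLast (p : Fin (M + 1)) (δ : Perm (Fin M)) : Perm (Fin (M + 1)) :=
  (finSuccEquiv' (Fin.last M)).trans (δ.optionCongr.trans (finSuccEquiv' p).symm)

@[simp]
lemma insertLast_last (p : Fin (M + 1)) (δ : Perm (Fin M)) : insertLast p δ (Fin.last M) = p := by
  simp [insertLast]

@[simp]
lemma insertLast_castSucc (p : Fin (M + 1)) (δ : Perm (Fin M)) (i : Fin M) :
    insertLast p δ i.castSucc = p.succAbove (δ i) := by
  simp [insertLast, finSuccEquiv'_last_apply_castSucc]

lemma insertLast_injective :
    Function.Injective fun pδ : Fin (M + 1) × Perm (Fin M) => insertLast pδ.1 pδ.2 := by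
  rintro ⟨p, δ⟩ ⟨p', δ'⟩ h
  obtain rfl : p = p' := by simpa using congrArg (· (Fin.last M)) h
  obtain rfl : δ = δ' := Equiv.ext fun i => by simpa using congrArg (· i.castSucc) h
  rfl

noncomputable def insertLastEquiv (M : ℕ) : Fin (M + 1) × Perm (Fin M) ≃ Perm (Fin (M + 1)) :=
  Equiv.ofBijective _ <| (Fintype.bijective_iff_injective_and_card _).2
    ⟨insertLast_injective, by simp [Fintype.card_perm, Nat.factorial_succ]⟩

lemma invCount_insertLast_castSucc (p : Fin (M + 1)) (δ : Perm (Fin M)) (j : Fin M) :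
    invCount (insertLast p δ) j.castSucc = invCount δ j := by
  simp only [invCount, card_filter, Fin.sum_univ_castSucc]
  simp [Fin.succAbove_lt_succAbove_iff, (Fin.castSucc_lt_last j).not_gt]

lemma invCount_insertLast_last (p : Fin (M + 1)) (δ : Perm (Fin M)) :
    invCount (insertLast p δ) (Fin.last M) = M - p := by
  rw [invCount, card_filter, Fin.sum_univ_castSucc]
  simp only [Fin.castSucc_lt_last, insertLast_last, insertLast_castSucc,
    Fin.lt_succAbove_iff_le_castSucc, true_and, sum_boole, Nat.cast_id, lt_self_iff_false, and_self,
    ↓reduceIte, add_zero]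
  calc #{i | p ≤ (δ i).castSucc} = #{i : Fin M | ¬ (i : ℕ) < p} :=
        card_equiv δ fun i => by simp [Fin.le_def]
    _ = M - p := by
        have := card_filter_add_card_filter_not (s := univ) fun i : Fin M => (i : ℕ) < p
        rw [Fin.card_filter_val_lt, card_univ, Fintype.card_fin] at this
        omega

lemma invCountStat_insertLast (p : Fin (M + 1)) (δ : Perm (Fin M)) (k : ℕ) :
    invCountStat (insertLast p δ) k = invCountStat δ k + if 0 < M ∧ M - p = k then 1 else 0 := by
  simp only [invCountStat, card_filter, Fin.sum_univ_castSucc, invCount_insertLast_castSucc,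
    invCount_insertLast_last, Fin.val_castSucc, Fin.val_last]

def swapTopTwo (M : ℕ) : Perm (Fin (M + 1)) := swap (Fin.last M) ⟨M - 1, by omega⟩

lemma swapTopTwo_involutive (M : ℕ) : Function.Involutive (swapTopTwo M) :=
  swap_apply_self _ _

lemma sub_swapTopTwo_eq_iff (p : Fin (M + 1)) (k : ℕ) :
    (0 < M ∧ M - swapTopTwo M p = k) ↔ (0 < M ∧ M - p = swap 0 1 k) := by
  simp only [swapTopTwo, swap_apply_def]
  split_ifs <;> simp_all [Fin.ext_iff] <;> omega

noncomputable def invTableSwap : (M : ℕ) → Perm (Fin M) → Perm (Fin M)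
  | 0 => id
  | M + 1 => fun σ =>
    insertLast (swapTopTwo M ((insertLastEquiv M).symm σ).1)
      (invTableSwap M ((insertLastEquiv M).symm σ).2)

lemma invTableSwap_insertLast (p : Fin (M + 1)) (δ : Perm (Fin M)) :
    invTableSwap (M + 1) (insertLast p δ) = insertLast (swapTopTwo M p) (invTableSwap M δ) := by
  have h : (insertLastEquiv M).symm (insertLast p δ) = (p, δ) :=
    (insertLastEquiv M).symm_apply_apply (p, δ)
  simp only [invTableSwap, h]

lemma invTableSwap_involutive : ∀ M, Function.Involutive (invTableSwap M)
  | 0 => fun _ => rfl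
  | M + 1 => fun σ => by
    obtain ⟨⟨p, δ⟩, rfl⟩ := (insertLastEquiv M).surjective σ
    simp only [insertLastEquiv, ofBijective_apply, invTableSwap_insertLast,
      swapTopTwo_involutive M p, invTableSwap_involutive M δ]

lemma invCountStat_invTableSwap :
    ∀ {M} (σ : Perm (Fin M)) (k : ℕ),
      invCountStat (invTableSwap M σ) k = invCountStat σ (swap 0 1 k)
  | 0, _, _ => rfl
  | M + 1, σ, k => by
    obtain ⟨⟨p, δ⟩, rfl⟩ := (insertLastEquiv M).surjective σ
    simp only [insertLastEquiv, ofBijective_apply, invTableSwap_insertLast, invCountStat_insertLast,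
      invCountStat_invTableSwap δ, sub_swapTopTwo_eq_iff]

end InversionTable

section ValuesAbove

variable {n : ℕ} (x : Fin n) (π : Perm (Fin n))

def posAbove : Finset (Fin n) := {p | x < π p}

variable {x π} in
@[simp]
lemma mem_posAbove {p : Fin n} : p ∈ posAbove x π ↔ x < π p := by
  simp [posAbove]

lemma card_posAbove : #(posAbove x π) = #(Ioi x) :=
  card_equiv π fun p => by simp

def valRank : Fin #(Ioi x) ≃o Ioi x := (Ioi x).orderIsoOfFin rfl

lemma lt_valRank (i : Fin #(Ioi x)) : x < valRank x i := mem_Ioi.1 (valRank x i).2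

variable {x} in
lemma valRank_lt_valRank_iff {i j : Fin #(Ioi x)} :
    (valRank x i : Fin n) < valRank x j ↔ i < j := by
  rw [Subtype.coe_lt_coe, OrderIso.lt_iff_lt]

variable {x} in
lemma exists_valRank_eq {v : Fin n} (hv : x < v) : ∃ i, (valRank x i : Fin n) = v :=
  ⟨(valRank x).symm ⟨v, mem_Ioi.2 hv⟩, by simp⟩

def posRank : Fin #(Ioi x) ≃o posAbove x π := (posAbove x π).orderIsoOfFin (card_posAbove x π)

variable {x π} in
lemma exists_posRank_eq {p : Fin n} (hp : x < π p) : ∃ k, (posRank x π k : Fin n) = p :=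
  ⟨(posRank x π).symm ⟨p, mem_posAbove.2 hp⟩, by simp⟩

/-- `stdAbove x π j` is the rank, among the positions holding values above `x`, of the position
of the `j`-th smallest value above `x`. -/
def stdAbove : Perm (Fin #(Ioi x)) :=
  (valRank x).toEquiv.trans
    ((π.subtypeEquiv fun p => by simp).symm.trans (posRank x π).symm.toEquiv)

lemma posRank_stdAbove (j : Fin #(Ioi x)) :
    (posRank x π (stdAbove x π j) : Fin n) = π.symm (valRank x j) := by
  simp [stdAbove]

lemma stdAbove_lt_stdAbove_iff (i j : Fin #(Ioi x)) :
    stdAbove x π i < stdAbove x π j ↔ π.symm (valRank x i) < π.symm (valRank x j) := by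
  rw [← posRank_stdAbove, ← posRank_stdAbove, Subtype.coe_lt_coe, OrderIso.lt_iff_lt]

def replaceAbove (τ : Perm (Fin #(Ioi x))) : Perm (Fin n) :=
  subtypeCongr ((posRank x π).symm.toEquiv.trans (τ.symm.trans (valRank x).toEquiv))
    (π.subtypeEquiv fun p => by simp)

variable (τ : Perm (Fin #(Ioi x)))

lemma replaceAbove_posRank (k : Fin #(Ioi x)) :
    replaceAbove x π τ (posRank x π k) = valRank x (τ.symm k) := by
  simp [replaceAbove, subtypeCongr, sumCompl_symm_apply_of_pos]

lemma replaceAbove_of_not_lt {p : Fin n} (hp : ¬ x < π p) : replaceAbove x π τ p = π p := by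
  simp [replaceAbove, subtypeCongr, sumCompl_symm_apply_of_neg, hp]

lemma posAbove_replaceAbove : posAbove x (replaceAbove x π τ) = posAbove x π := by
  ext p
  by_cases hp : x < π p
  · obtain ⟨k, rfl⟩ := exists_posRank_eq hp
    rw [mem_posAbove, mem_posAbove, replaceAbove_posRank]
    exact iff_of_true (mem_Ioi.1 (valRank x _).2) (mem_posAbove.1 (posRank x π k).2)
  · simp [replaceAbove_of_not_lt x π τ hp, hp]

lemma posRank_replaceAbove (k : Fin #(Ioi x)) :
    (posRank x (replaceAbove x π τ) k : Fin n) = posRank x π k := by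
  simp only [posRank, coe_orderIsoOfFin_apply]
  rw [orderEmbOfFin_unique' (card_posAbove x π)
    (f := (posAbove x (replaceAbove x π τ)).orderEmbOfFin (card_posAbove x _)) fun i => by
      rw [← posAbove_replaceAbove x π τ]; exact orderEmbOfFin_mem _ _ i]

lemma stdAbove_replaceAbove : stdAbove x (replaceAbove x π τ) = τ := by
  refine Equiv.ext fun j => ?_
  have h := posRank_stdAbove x (replaceAbove x π τ) j
  rw [posRank_replaceAbove, Equiv.eq_symm_apply, replaceAbove_posRank] at h
  exact τ.symm_apply_eq.1 ((valRank x).injective (Subtype.ext h))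

lemma replaceAbove_replaceAbove (τ' : Perm (Fin #(Ioi x))) :
    replaceAbove x (replaceAbove x π τ) τ' = replaceAbove x π τ' := by
  ext p
  by_cases hp : x < π p
  · obtain ⟨k, rfl⟩ := exists_posRank_eq hp
    rw [replaceAbove_posRank x π τ', ← posRank_replaceAbove x π τ, replaceAbove_posRank]
  · have hp' : ¬ x < replaceAbove x π τ p := by rwa [replaceAbove_of_not_lt x π τ hp]
    rw [replaceAbove_of_not_lt _ _ _ hp', replaceAbove_of_not_lt _ _ _ hp,
      replaceAbove_of_not_lt _ _ _ hp]

lemma replaceAbove_stdAbove : replaceAbove x π (stdAbove x π) = π := by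
  ext p
  by_cases hp : x < π p
  · obtain ⟨k, rfl⟩ := exists_posRank_eq hp
    rw [replaceAbove_posRank, ← (stdAbove x π).apply_symm_apply k, posRank_stdAbove]
    simp
  · rw [replaceAbove_of_not_lt x π _ hp]

def laterBelow (c : Fin n) : ℕ := #{v ∈ Ioo x c | π.symm c < π.symm v}

def aboveStat (k : ℕ) : ℕ := #{c | (Ioo x c).Nonempty ∧ laterBelow x π c = k}

lemma laterBelow_valRank (j : Fin #(Ioi x)) :
    laterBelow x π (valRank x j) = invCount (stdAbove x π) j := by
  symm
  refine card_nbij (fun i => (valRank x i : Fin n)) (fun i hi => ?_)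
    (fun i _ i' _ h => (valRank x).injective (Subtype.ext h)) (fun v hv => ?_)
  · simp only [mem_coe, mem_filter, mem_univ, true_and] at hi
    simp only [mem_coe, mem_filter, mem_Ioo, valRank_lt_valRank_iff, ← stdAbove_lt_stdAbove_iff]
    exact ⟨⟨lt_valRank x i, hi.1⟩, hi.2⟩
  · simp only [mem_coe, mem_filter, mem_Ioo] at hv
    obtain ⟨i, rfl⟩ := exists_valRank_eq hv.1.1
    rw [valRank_lt_valRank_iff, ← stdAbove_lt_stdAbove_iff] at hv
    exact ⟨i, by simpa using ⟨hv.1.2, hv.2⟩, rfl⟩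

lemma nonempty_Ioo_valRank_iff (j : Fin #(Ioi x)) :
    (Ioo x (valRank x j : Fin n)).Nonempty ↔ 0 < (j : ℕ) := by
  constructor
  · rintro ⟨v, hv⟩
    rw [mem_Ioo] at hv
    obtain ⟨i, rfl⟩ := exists_valRank_eq hv.1
    exact Nat.zero_lt_of_lt (valRank_lt_valRank_iff.1 hv.2)
  · intro hj
    refine ⟨valRank x ⟨0, by omega⟩, mem_Ioo.2 ⟨lt_valRank x _, valRank_lt_valRank_iff.2 ?_⟩⟩
    exact Fin.lt_def.2 hj

lemma aboveStat_eq_invCountStat (k : ℕ) : aboveStat x π k = invCountStat (stdAbove x π) k := by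
  symm
  refine card_nbij (fun j => (valRank x j : Fin n)) (fun j hj => ?_)
    (fun i _ i' _ h => (valRank x).injective (Subtype.ext h)) (fun c hc => ?_)
  · simp only [mem_coe, mem_filter, mem_univ, true_and] at hj ⊢
    rwa [nonempty_Ioo_valRank_iff, laterBelow_valRank]
  · simp only [mem_coe, mem_filter, mem_univ, true_and] at hc
    obtain ⟨v, hv⟩ := hc.1
    obtain ⟨j, rfl⟩ := exists_valRank_eq ((mem_Ioo.1 hv).1.trans (mem_Ioo.1 hv).2)
    rw [nonempty_Ioo_valRank_iff, laterBelow_valRank] at hc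
    exact ⟨j, by simpa using hc, rfl⟩

end ValuesAbove

section MeshOccurrences

variable {n : ℕ}

def meshShading : Set (ℕ × ℕ) :=
  {(0, 0), (0, 1), (0, 2), (0, 3), (2, 1), (2, 2), (3, 1), (3, 2)}

lemma meshShading_cells_iff {τ : Perm (Fin 3)} (hτ : τ.symm 0 = 0) (π : Perm (Fin (n + 1)))
    (i : Fin 3 → Fin (n + 1)) :
    (∀ a b : ℕ, (a, b) ∈ meshShading → ¬∃ j : Fin (n + 1),
        posExt i a < (j : ℕ) + 1 ∧ (j : ℕ) + 1 < posExt i (a + 1) ∧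
        valExt τ π i b < ((π j : Fin (n + 1)) : ℕ) + 1 ∧
        ((π j : Fin (n + 1)) : ℕ) + 1 < valExt τ π i (b + 1)) ↔
      (∀ j < i 0, π (i 0) ≤ π j) ∧
      (∀ j < i 0, π (i 0) < π j → π (i (τ.symm 1)) ≤ π j) ∧
      (∀ j < i 0, π (i (τ.symm 1)) < π j → π (i (τ.symm 2)) ≤ π j) ∧
      (∀ j < i 0, π (i (τ.symm 2)) < π j → n < π j) ∧
      (∀ j, i 1 < j → j < i 2 → π (i 0) < π j → π (i (τ.symm 1)) ≤ π j) ∧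
      (∀ j, i 1 < j → j < i 2 → π (i (τ.symm 1)) < π j → π (i (τ.symm 2)) ≤ π j) ∧
      (∀ j, i 2 < j → j ≤ n → π (i 0) < π j → π (i (τ.symm 1)) ≤ π j) ∧
      (∀ j, i 2 < j → j ≤ n → π (i (τ.symm 1)) < π j → π (i (τ.symm 2)) ≤ π j) := by
  simp only [meshShading, Set.mem_insert_iff, Set.mem_singleton_iff, Prod.mk.injEq, or_imp,
    forall_and, and_imp, not_exists, posExt, valExt]
  simp [hτ]

lemma meshShading_iff {τ : Perm (Fin 3)} (hτ : τ.symm 0 = 0) {π : Perm (Fin (n + 1))}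
    {i : Fin 3 → Fin (n + 1)} (hi : StrictMono i) (hv : StrictMono fun b => π (i (τ.symm b))) :
    (∀ a b : ℕ, (a, b) ∈ meshShading → ¬∃ j : Fin (n + 1),
        posExt i a < (j : ℕ) + 1 ∧ (j : ℕ) + 1 < posExt i (a + 1) ∧
        valExt τ π i b < ((π j : Fin (n + 1)) : ℕ) + 1 ∧
        ((π j : Fin (n + 1)) : ℕ) + 1 < valExt τ π i (b + 1)) ↔
      i 0 = 0 ∧ ∀ j, i 1 < j → j ≠ i 2 → ¬(π (i 0) < π j ∧ π j < π (i (τ.symm 2))) := by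
  have h01 : i 0 < i 1 := hi (by decide)
  have h12 : i 1 < i 2 := hi (by decide)
  have hv01 : π (i 0) < π (i (τ.symm 1)) := hτ ▸ hv (by decide : (0 : Fin 3) < 1)
  have hv12 : π (i (τ.symm 1)) < π (i (τ.symm 2)) := hv (by decide)
  have hout : ∀ j, (∀ a, j ≠ i a) → ∀ a, π j ≠ π (i a) := fun j hj a h => hj a (π.injective h)
  rw [meshShading_cells_iff hτ]
  constructor
  · rintro ⟨c00, c01, c02, c03, c21, c22, c31, c32⟩
    refine ⟨?_, fun j h1j h2j ⟨hlo, htop⟩ => ?_⟩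
    · by_contra h0
      have hpos : 0 < i 0 := Fin.pos_iff_ne_zero.2 h0
      have h0out := hout 0 fun a h => hpos.not_ge ((hi.monotone (Fin.zero_le a)).trans_eq h.symm)
      have := h0out 0
      have := h0out (τ.symm 1)
      have := h0out (τ.symm 2)
      have := c00 0 hpos
      have := c01 0 hpos
      have := c02 0 hpos
      have := c03 0 hpos
      omega
    · have hj : ∀ a, j ≠ i a := fun a => by
        fin_cases a
        exacts [(h01.trans h1j).ne', h1j.ne', h2j]
      have := hout j hj (τ.symm 1)
      rcases lt_or_gt_of_ne h2j with hj | hj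
      · have := c21 j h1j hj hlo
        have := c22 j h1j hj
        omega
      · have := c31 j hj (by omega) hlo
        have := c32 j hj (by omega)
        omega
  · rintro ⟨hi0, hreg⟩
    have hcol0 : ∀ j, ¬ j < i 0 := fun j => hi0 ▸ Fin.not_lt_zero j
    refine ⟨fun j hj => absurd hj (hcol0 j), fun j hj => absurd hj (hcol0 j),
      fun j hj => absurd hj (hcol0 j), fun j hj => absurd hj (hcol0 j), ?_, ?_, ?_, ?_⟩ <;>
      intro j h1j h2j hlo <;> have := hreg j (by omega) (by omega) <;> omega

lemma isMeshOcc_meshShading_iff {τ : Perm (Fin 3)} (hτ : τ.symm 0 = 0) (π : Perm (Fin (n + 1)))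
    (i : Fin 3 → Fin (n + 1)) :
    IsMeshOcc τ meshShading π i ↔ StrictMono i ∧ StrictMono (fun b => π (i (τ.symm b))) ∧
      i 0 = 0 ∧ ∀ j, i 1 < j → j ≠ i 2 → ¬(π (i 0) < π j ∧ π j < π (i (τ.symm 2))) := by
  rw [IsMeshOcc, lt_iff_lt_iff_strictMono_comp_symm]
  exact and_congr_right fun hi => and_congr_right fun hv => meshShading_iff hτ hi hv

lemma isMeshOcc_perm123_iff (π : Perm (Fin (n + 1))) (i : Fin 3 → Fin (n + 1)) :
    IsMeshOcc perm123 meshShading π i ↔ i 0 = 0 ∧ i 0 < i 1 ∧ i 1 < i 2 ∧ π (i 0) < π (i 1) ∧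
      π (i 1) < π (i 2) ∧ ∀ j, i 1 < j → j ≠ i 2 → ¬(π (i 0) < π j ∧ π j < π (i 2)) := by
  rw [isMeshOcc_meshShading_iff (by rfl)]
  simp only [Fin.strictMono_iff_lt_succ, Fin.forall_fin_two, Fin.isValue, Fin.castSucc_zero,
    Fin.succ_zero_eq_one, Fin.castSucc_one, Fin.succ_one_eq_two, perm123, ne_eq, not_and, not_lt]
  tauto

lemma isMeshOcc_perm132_iff (π : Perm (Fin (n + 1))) (i : Fin 3 → Fin (n + 1)) :
    IsMeshOcc perm132 meshShading π i ↔ i 0 = 0 ∧ i 0 < i 1 ∧ i 1 < i 2 ∧ π (i 0) < π (i 2) ∧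
      π (i 2) < π (i 1) ∧ ∀ j, i 1 < j → j ≠ i 2 → ¬(π (i 0) < π j ∧ π j < π (i 1)) := by
  rw [isMeshOcc_meshShading_iff (by decide)]
  simp only [Fin.strictMono_iff_lt_succ, Fin.forall_fin_two, Fin.isValue, Fin.castSucc_zero,
    Fin.succ_zero_eq_one, Fin.castSucc_one, Fin.succ_one_eq_two, perm132, symm_swap, ne_eq,
    swap_apply_left, swap_apply_right, not_and, not_lt]
  tauto

section

variable {π : Perm (Fin (n + 1))} {i i' : Fin 3 → Fin (n + 1)}

lemma laterBelow_eq_zero_of_isMeshOcc_perm123 (hi : IsMeshOcc perm123 meshShading π i) :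
    (Ioo (π 0) (π (i 2))).Nonempty ∧ laterBelow (π 0) π (π (i 2)) = 0 := by
  obtain ⟨hi0, -, h12, hv01, hv12, hreg⟩ := (isMeshOcc_perm123_iff π i).1 hi
  rw [hi0] at hv01 hreg
  refine ⟨⟨π (i 1), mem_Ioo.2 ⟨hv01, hv12⟩⟩,
    card_eq_zero.2 (filter_eq_empty_iff.2 fun v hv hlt => ?_)⟩
  rw [π.symm_apply_apply] at hlt
  exact hreg (π.symm v) (h12.trans hlt) hlt.ne' (by simpa using hv)

lemma eq_of_isMeshOcc_perm123 (hi : IsMeshOcc perm123 meshShading π i)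
    (hi' : IsMeshOcc perm123 meshShading π i') (h : π (i 2) = π (i' 2)) : i = i' := by
  obtain ⟨hi0, -, h12, hv01, hv12, hreg⟩ := (isMeshOcc_perm123_iff π i).1 hi
  obtain ⟨hi0', -, h12', hv01', hv12', hreg'⟩ := (isMeshOcc_perm123_iff π i').1 hi'
  have h2 : i 2 = i' 2 := π.injective h
  have h1 : i 1 = i' 1 := by
    by_contra hne
    rcases lt_or_gt_of_ne hne with hlt | hlt
    · exact hreg (i' 1) hlt (h2 ▸ h12'.ne) ⟨hi0 ▸ hi0' ▸ hv01', h ▸ hv12'⟩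
    · exact hreg' (i 1) hlt (h2 ▸ h12.ne) ⟨hi0' ▸ hi0 ▸ hv01, h ▸ hv12⟩
  funext a
  fin_cases a
  exacts [hi0.trans hi0'.symm, h1, h2]

lemma exists_isMeshOcc_perm123 {c : Fin (n + 1)} (hc : (Ioo (π 0) c).Nonempty)
    (hlater : laterBelow (π 0) π c = 0) : ∃ i, IsMeshOcc perm123 meshShading π i ∧ π (i 2) = c := by
  rw [laterBelow, card_eq_zero, filter_eq_empty_iff] at hlater
  obtain ⟨b, hb⟩ := hc
  have hT : ({p | π p ∈ Ioo (π 0) c} : Finset _).Nonempty := ⟨π.symm b, by simpa using hb⟩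
  set q := ({p | π p ∈ Ioo (π 0) c} : Finset _).max' hT
  have hq : π q ∈ Ioo (π 0) c := (mem_filter.1 (max'_mem _ hT)).2
  have hqmax : ∀ j, π j ∈ Ioo (π 0) c → j ≤ q := fun j hj =>
    le_max' _ j (mem_filter.2 ⟨mem_univ _, hj⟩)
  rw [mem_Ioo] at hq
  have hq0 : 0 < q := Fin.pos_iff_ne_zero.2 fun h => by simp [h] at hq
  have hqc : q < π.symm c := by
    refine lt_of_le_of_ne (not_lt.1 ?_) fun h => ?_
    · simpa using hlater (mem_Ioo.2 hq)
    · simp [h] at hq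
  refine ⟨![0, q, π.symm c], (isMeshOcc_perm123_iff π _).2 ?_, by simp⟩
  simp only [Fin.isValue, Matrix.cons_val_zero, Matrix.cons_val_one, Matrix.cons_val_two,
    Matrix.head_cons, Matrix.tail_cons, apply_symm_apply, true_and]
  exact ⟨hq0, hqc, hq.1, hq.2, fun j hqj _ hj => (hqmax j (mem_Ioo.2 hj)).not_gt hqj⟩

lemma laterBelow_eq_one_of_isMeshOcc_perm132 (hi : IsMeshOcc perm132 meshShading π i) :
    (Ioo (π 0) (π (i 1))).Nonempty ∧ laterBelow (π 0) π (π (i 1)) = 1 := by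
  obtain ⟨hi0, -, h12, hv02, hv21, hreg⟩ := (isMeshOcc_perm132_iff π i).1 hi
  rw [hi0] at hv02 hreg
  refine ⟨⟨π (i 2), mem_Ioo.2 ⟨hv02, hv21⟩⟩, card_eq_one.2 ⟨π (i 2), ?_⟩⟩
  ext v
  simp only [mem_filter, mem_Ioo, mem_singleton, symm_apply_apply]
  refine ⟨fun ⟨hv, hlt⟩ => ?_, fun hv => hv ▸ ⟨⟨hv02, hv21⟩, by simpa using h12⟩⟩
  by_contra hne
  exact hreg (π.symm v) hlt (fun h => hne (by simp [← h])) (by simpa using hv)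

lemma eq_of_isMeshOcc_perm132 (hi : IsMeshOcc perm132 meshShading π i)
    (hi' : IsMeshOcc perm132 meshShading π i') (h : π (i 1) = π (i' 1)) : i = i' := by
  obtain ⟨hi0, -, -, -, -, hreg⟩ := (isMeshOcc_perm132_iff π i).1 hi
  obtain ⟨hi0', -, h12', hv02', hv21', -⟩ := (isMeshOcc_perm132_iff π i').1 hi'
  have h1 : i 1 = i' 1 := π.injective h
  have h2 : i 2 = i' 2 := by
    by_contra hne
    exact hreg (i' 2) (h1 ▸ h12') (Ne.symm hne) ⟨hi0 ▸ hi0' ▸ hv02', h ▸ hv21'⟩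
  funext a
  fin_cases a
  exacts [hi0.trans hi0'.symm, h1, h2]

lemma exists_isMeshOcc_perm132 {c : Fin (n + 1)} (hlater : laterBelow (π 0) π c = 1) :
    ∃ i, IsMeshOcc perm132 meshShading π i ∧ π (i 1) = c := by
  obtain ⟨v, hv⟩ := card_eq_one.1 hlater
  have hvmem : v ∈ ({w ∈ Ioo (π 0) c | π.symm c < π.symm w} : Finset _) :=
    hv ▸ mem_singleton_self v
  rw [mem_filter, mem_Ioo] at hvmem
  have huniq : ∀ w ∈ Ioo (π 0) c, π.symm c < π.symm w → w = v := fun w hw hlt =>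
    mem_singleton.1 (hv ▸ mem_filter.2 ⟨hw, hlt⟩)
  have hc0 : 0 < π.symm c :=
    Fin.pos_iff_ne_zero.2 fun h => (hvmem.1.1.trans hvmem.1.2).ne' (π.symm_apply_eq.1 h)
  refine ⟨![0, π.symm c, π.symm v], (isMeshOcc_perm132_iff π _).2 ?_, by simp⟩
  simp only [Fin.isValue, Matrix.cons_val_zero, Matrix.cons_val_one, Matrix.cons_val_two,
    Matrix.head_cons, Matrix.tail_cons, apply_symm_apply, true_and]
  refine ⟨hc0, hvmem.2, hvmem.1.1, hvmem.1.2, fun j hj hjv hj' => hjv ?_⟩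
  rw [← huniq (π j) (mem_Ioo.2 hj') (by simpa using hj), symm_apply_apply]

end

lemma occ_perm123_eq (π : Perm (Fin (n + 1))) :
    occ perm123 meshShading π = aboveStat (π 0) π 0 :=
  occ_eq_card_of_bijective (fun i => π (i 2)) _
    (fun _ hi => by simpa using laterBelow_eq_zero_of_isMeshOcc_perm123 hi)
    (fun _ _ => eq_of_isMeshOcc_perm123)
    (fun _ hc => exists_isMeshOcc_perm123 (mem_filter.1 hc).2.1 (mem_filter.1 hc).2.2)

lemma occ_perm132_eq (π : Perm (Fin (n + 1))) :
    occ perm132 meshShading π = aboveStat (π 0) π 1 :=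
  occ_eq_card_of_bijective (fun i => π (i 1)) _
    (fun _ hi => by simpa using laterBelow_eq_one_of_isMeshOcc_perm132 hi)
    (fun _ _ => eq_of_isMeshOcc_perm132)
    (fun _ hc => exists_isMeshOcc_perm132 (mem_filter.1 hc).2.2)

noncomputable def swapCodes (π : Perm (Fin (n + 1))) : Perm (Fin (n + 1)) :=
  replaceAbove (π 0) π (invTableSwap _ (stdAbove (π 0) π))

lemma swapCodes_zero (π : Perm (Fin (n + 1))) : swapCodes π 0 = π 0 :=
  replaceAbove_of_not_lt _ _ _ (lt_irrefl _)

lemma swapCodes_involutive : Function.Involutive (swapCodes (n := n)) := fun π => by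
  rw [swapCodes, swapCodes_zero, swapCodes, stdAbove_replaceAbove, invTableSwap_involutive,
    replaceAbove_replaceAbove, replaceAbove_stdAbove]

lemma occ_perm123_swapCodes (π : Perm (Fin (n + 1))) :
    occ perm123 meshShading (swapCodes π) = occ perm132 meshShading π := by
  rw [occ_perm123_eq, occ_perm132_eq, swapCodes_zero, aboveStat_eq_invCountStat,
    aboveStat_eq_invCountStat, swapCodes, stdAbove_replaceAbove, invCountStat_invTableSwap,
    swap_apply_left]

end MeshOccurrences

theorem statement_2 :
    JointlyEquidistributed perm123 ({(0, 0), (0, 1), (0, 2), (0, 3), (2, 1), (2, 2), (3, 1), (3, 2)} : Set (ℕ × ℕ))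
      perm132 ({(0, 0), (0, 1), (0, 2), (0, 3), (2, 1), (2, 2), (3, 1), (3, 2)} : Set (ℕ × ℕ)) := by
  refine jointlyEquidistributed_of_involutive fun n => ?_
  cases n with
  | zero => exact ⟨id, fun _ => rfl, fun π => by simp [occ_of_fin_zero]⟩
  | succ n => exact ⟨swapCodes, swapCodes_involutive, occ_perm123_swapCodes⟩
end

section
/- Let S17 = {(0,0),(0,1),(0,2),(0,3),(2,1),(2,2),(3,1),(3,2)}, S18 = {(0,0),(0,1),(0,2),(0,3),(1,2),(1,3),(2,2),(2,3)}, S17' = {(0,0),(1,0),(1,2),(1,3),(2,0),(2,2),(2,3),(3,0)}, and S18' = {(0,0),(1,0),(2,0),(2,1),(2,2),(3,0),(3,1),(3,2)}. Then for every S ∈ {S18, S17', S18'} and all n, k, ℓ ≥ 0, the number of π ∈ S_n with occ((123,S),π)=k and occ((132,S),π)=ℓ equals the number of π ∈ S_n with occ((123,S17),π)=k and occ((132,S17),π)=ℓ; that is, the four pairs of mesh patterns {(123,S),(132,S)} for S ∈ {S17,S18,S17',S18'} all have the same joint distribution. -/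
def S17 : Set (ℕ × ℕ) := ({(0, 0), (0, 1), (0, 2), (0, 3), (2, 1), (2, 2), (3, 1), (3, 2)} : Set (ℕ × ℕ))
def S18 : Set (ℕ × ℕ) := ({(0, 0), (0, 1), (0, 2), (0, 3), (1, 2), (1, 3), (2, 2), (2, 3)} : Set (ℕ × ℕ))
def S17' : Set (ℕ × ℕ) := ({(0, 0), (1, 0), (1, 2), (1, 3), (2, 0), (2, 2), (2, 3), (3, 0)} : Set (ℕ × ℕ))
def S18' : Set (ℕ × ℕ) := ({(0, 0), (1, 0), (2, 0), (2, 1), (2, 2), (3, 0), (3, 1), (3, 2)} : Set (ℕ × ℕ))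

section Transpose

def transp (R : Set (ℕ × ℕ)) : Set (ℕ × ℕ) := {p | (p.2, p.1) ∈ R}

lemma transp_transp (R : Set (ℕ × ℕ)) : transp (transp R) = R := rfl

lemma S17'_eq : S17' = transp S17 := by
  ext ⟨a, b⟩
  simp [S17, S17', transp, Prod.ext_iff]
  omega

lemma S18'_eq : S18' = transp S18 := by
  ext ⟨a, b⟩
  simp [S18, S18', transp, Prod.ext_iff]
  omega

variable {m n : ℕ}

lemma posExt_conj (τ : Equiv.Perm (Fin m)) (π : Equiv.Perm (Fin n)) (i : Fin m → Fin n) :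
    posExt (fun b => π (i (τ.symm b))) = valExt τ π i := by
  funext a
  unfold posExt valExt
  split_ifs <;> rfl

lemma valExt_conj (τ : Equiv.Perm (Fin m)) (hτ : τ.symm = τ) (π : Equiv.Perm (Fin n))
    (i : Fin m → Fin n) :
    valExt τ π.symm (fun b => π (i (τ.symm b))) = posExt i := by
  have hz : ∀ z : Fin m, τ.symm (τ.symm z) = z := by
    intro z
    nth_rewrite 2 [hτ]
    exact τ.symm_apply_apply z
  funext b
  unfold posExt valExt
  split_ifs with h h2 <;> first | simp [hz] | rfl

lemma isMeshOcc_conj (τ : Equiv.Perm (Fin m)) (hτ : τ.symm = τ) (R : Set (ℕ × ℕ))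
    (π : Equiv.Perm (Fin n)) (i : Fin m → Fin n) (h : IsMeshOcc τ R π i) :
    IsMeshOcc τ (transp R) π.symm (fun b => π (i (τ.symm b))) := by
  obtain ⟨hmono, hpatt, hmesh⟩ := h
  refine ⟨?_, ?_, ?_⟩
  · intro a b hab
    rw [hpatt]
    simpa using hab
  · intro a b
    simp only [Equiv.symm_apply_apply]
    constructor
    · intro h'
      rw [← hτ]
      exact (hmono.lt_iff_lt.mp h')
    · intro h'
      rw [← hτ] at h'
      exact hmono h'
  · intro a b hab hex
    obtain ⟨j, h1, h2, h3, h4⟩ := hex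
    rw [posExt_conj] at h1 h2
    rw [valExt_conj τ hτ] at h3 h4
    exact hmesh b a hab ⟨π.symm j, by simpa using h3, by simpa using h4,
      by simpa using h1, by simpa using h2⟩

noncomputable def conjEquiv (τ : Equiv.Perm (Fin m)) (hτ : τ.symm = τ) (R : Set (ℕ × ℕ))
    (π : Equiv.Perm (Fin n)) :
    {i : Fin m → Fin n // IsMeshOcc τ R π i} ≃
    {i : Fin m → Fin n // IsMeshOcc τ (transp R) π.symm i} where
  toFun i := ⟨fun b => π (i.1 (τ.symm b)), isMeshOcc_conj τ hτ R π i.1 i.2⟩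
  invFun i := ⟨fun b => π.symm (i.1 (τ.symm b)), by
    have := isMeshOcc_conj τ hτ (transp R) π.symm i.1 i.2
    rwa [transp_transp, Equiv.symm_symm] at this⟩
  left_inv i := by
    have hz : ∀ z : Fin m, τ.symm (τ.symm z) = z := by
      intro z
      nth_rewrite 2 [hτ]
      exact τ.symm_apply_apply z
    ext b
    simp [hz]
  right_inv i := by
    have hz : ∀ z : Fin m, τ.symm (τ.symm z) = z := by
      intro z
      nth_rewrite 2 [hτ]
      exact τ.symm_apply_apply z
    ext b
    simp [hz]

lemma occ_transp (τ : Equiv.Perm (Fin m)) (hτ : τ.symm = τ) (R : Set (ℕ × ℕ))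
    (π : Equiv.Perm (Fin n)) : occ τ (transp R) π = occ τ R π.symm := by
  unfold occ
  refine Nat.card_congr (Equiv.symm ?_)
  have := conjEquiv τ hτ R π.symm
  rwa [Equiv.symm_symm] at this

end Transpose
section Char

variable {n : ℕ}

lemma posExt3_zero (i : Fin 3 → Fin n) : posExt i 0 = 0 := by simp [posExt]
lemma posExt3_one (i : Fin 3 → Fin n) : posExt i 1 = (i 0 : ℕ) + 1 := by
  simp only [posExt]
  rw [dif_pos (by omega : 1 ≤ 1 ∧ 1 ≤ 3)]
  rfl
lemma posExt3_two (i : Fin 3 → Fin n) : posExt i 2 = (i 1 : ℕ) + 1 := by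
  simp only [posExt]
  rw [dif_pos (by omega : 1 ≤ 2 ∧ 2 ≤ 3)]
  rfl
lemma posExt3_three (i : Fin 3 → Fin n) : posExt i 3 = (i 2 : ℕ) + 1 := by
  simp only [posExt]
  rw [dif_pos (by omega : 1 ≤ 3 ∧ 3 ≤ 3)]
  rfl
lemma posExt3_four (i : Fin 3 → Fin n) : posExt i 4 = n + 1 := by
  simp [posExt]

lemma valExt123_zero (π : Equiv.Perm (Fin n)) (i : Fin 3 → Fin n) :
    valExt perm123 π i 0 = 0 := by simp [valExt]
lemma valExt123_one (π : Equiv.Perm (Fin n)) (i : Fin 3 → Fin n) :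
    valExt perm123 π i 1 = (π (i 0) : ℕ) + 1 := by
  simp only [valExt]
  rw [dif_pos (by omega : 1 ≤ 1 ∧ 1 ≤ 3)]
  rfl
lemma valExt123_two (π : Equiv.Perm (Fin n)) (i : Fin 3 → Fin n) :
    valExt perm123 π i 2 = (π (i 1) : ℕ) + 1 := by
  simp only [valExt]
  rw [dif_pos (by omega : 1 ≤ 2 ∧ 2 ≤ 3)]
  rfl
lemma valExt123_three (π : Equiv.Perm (Fin n)) (i : Fin 3 → Fin n) :
    valExt perm123 π i 3 = (π (i 2) : ℕ) + 1 := by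
  simp only [valExt]
  rw [dif_pos (by omega : 1 ≤ 3 ∧ 3 ≤ 3)]
  rfl
lemma valExt123_four (π : Equiv.Perm (Fin n)) (i : Fin 3 → Fin n) :
    valExt perm123 π i 4 = n + 1 := by simp [valExt]

lemma valExt132_zero (π : Equiv.Perm (Fin n)) (i : Fin 3 → Fin n) :
    valExt perm132 π i 0 = 0 := by simp [valExt]
lemma valExt132_one (π : Equiv.Perm (Fin n)) (i : Fin 3 → Fin n) :
    valExt perm132 π i 1 = (π (i 0) : ℕ) + 1 := by
  simp only [valExt]
  rw [dif_pos (by omega : 1 ≤ 1 ∧ 1 ≤ 3)]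
  have : (perm132.symm ⟨1 - 1, by omega⟩) = 0 := by decide
  rw [this]
lemma valExt132_two (π : Equiv.Perm (Fin n)) (i : Fin 3 → Fin n) :
    valExt perm132 π i 2 = (π (i 2) : ℕ) + 1 := by
  simp only [valExt]
  rw [dif_pos (by omega : 1 ≤ 2 ∧ 2 ≤ 3)]
  have : (perm132.symm ⟨2 - 1, by omega⟩) = 2 := by decide
  rw [this]
lemma valExt132_three (π : Equiv.Perm (Fin n)) (i : Fin 3 → Fin n) :
    valExt perm132 π i 3 = (π (i 1) : ℕ) + 1 := by
  simp only [valExt]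
  rw [dif_pos (by omega : 1 ≤ 3 ∧ 3 ≤ 3)]
  have : (perm132.symm ⟨3 - 1, by omega⟩) = 1 := by decide
  rw [this]
lemma valExt132_four (π : Equiv.Perm (Fin n)) (i : Fin 3 → Fin n) :
    valExt perm132 π i 4 = n + 1 := by simp [valExt]

lemma strictMono_fin3 (i : Fin 3 → Fin n) :
    StrictMono i ↔ i 0 < i 1 ∧ i 1 < i 2 := by
  constructor
  · intro h
    exact ⟨h (by decide), h (by decide)⟩
  · rintro ⟨h1, h2⟩ a b hab
    fin_cases a <;> fin_cases b <;> simp_all <;> omega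
lemma sm3 {α : Type*} [Preorder α] (f : Fin 3 → α) (h1 : f 0 < f 1) (h2 : f 1 < f 2) :
    StrictMono f := by
  intro a b hab
  rcases a with ⟨av, ha⟩; rcases b with ⟨bv, hb⟩
  rw [Fin.mk_lt_mk] at hab
  have e0 : (⟨0, by omega⟩ : Fin 3) = 0 := rfl
  have e1 : (⟨1, by omega⟩ : Fin 3) = 1 := rfl
  have e2 : (⟨2, by omega⟩ : Fin 3) = 2 := rfl
  interval_cases av <;> interval_cases bv <;> simp_all <;> exact lt_trans h1 h2

lemma strictMono_fin3' {n : ℕ} (i : Fin 3 → Fin n) :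
    StrictMono i ↔ i 0 < i 1 ∧ i 1 < i 2 := by
  constructor
  · intro h
    exact ⟨h (by decide), h (by decide)⟩
  · rintro ⟨h1, h2⟩
    exact sm3 i h1 h2

lemma patt123 {n : ℕ} (π : Equiv.Perm (Fin n)) (i : Fin 3 → Fin n) :
    (∀ a b : Fin 3, π (i a) < π (i b) ↔ perm123 a < perm123 b) ↔
      (π (i 0) < π (i 1) ∧ π (i 1) < π (i 2)) := by
  constructor
  · intro h
    exact ⟨(h 0 1).mpr (by decide), (h 1 2).mpr (by decide)⟩
  · rintro ⟨h1, h2⟩ a b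
    have hsm := sm3 (fun a => π (i a)) h1 h2
    simpa [perm123] using hsm.lt_iff_lt (a := a) (b := b)

lemma patt132 {n : ℕ} (π : Equiv.Perm (Fin n)) (i : Fin 3 → Fin n) :
    (∀ a b : Fin 3, π (i a) < π (i b) ↔ perm132 a < perm132 b) ↔
      (π (i 0) < π (i 2) ∧ π (i 2) < π (i 1)) := by
  constructor
  · intro h
    exact ⟨(h 0 2).mpr (by decide), (h 2 1).mpr (by decide)⟩
  · rintro ⟨h1, h2⟩ a b
    have e0 : perm132 0 = 0 := by decide
    have e1 : perm132 1 = 2 := by decide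
    have e2 : perm132 2 = 1 := by decide
    have hgg : ∀ z, perm132 (perm132 z) = z := by decide
    have hsm : StrictMono (fun a => π (i (perm132 a))) := by
      apply sm3 <;> simp only [e0, e1, e2]
      · exact h1
      · exact h2
    have := hsm.lt_iff_lt (a := perm132 a) (b := perm132 b)
    simpa [hgg] using this
section CharLemmas
variable {n : ℕ} (π : Equiv.Perm (Fin n)) (i : Fin 3 → Fin n)

lemma val_ne_of_ne {j k : Fin n} (h : j ≠ k) : (π j : ℕ) ≠ (π k : ℕ) :=
  fun he => h (π.injective (Fin.val_injective he))

lemma char_123_S18 :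
    IsMeshOcc perm123 S18 π i ↔
      ((i 0 : ℕ) = 0 ∧ i 0 < i 1 ∧ i 1 < i 2 ∧ π (i 0) < π (i 1) ∧ π (i 1) < π (i 2) ∧
        ∀ j : Fin n, i 0 < j → j < i 2 → j ≠ i 1 → π j < π (i 1)) := by
  unfold IsMeshOcc
  rw [strictMono_fin3', patt123]
  constructor
  · rintro ⟨⟨h01, h12⟩, ⟨hv01, hv12⟩, hmesh⟩
    have h01n : (i 0 : ℕ) < (i 1 : ℕ) := h01
    have h12n : (i 1 : ℕ) < (i 2 : ℕ) := h12
    have hv01n : (π (i 0) : ℕ) < (π (i 1) : ℕ) := hv01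
    have hv12n : (π (i 1) : ℕ) < (π (i 2) : ℕ) := hv12
    refine ⟨?_, h01, h12, hv01, hv12, ?_⟩
    · by_contra h0
      have hn : 0 < (i 0 : ℕ) := Nat.pos_of_ne_zero h0
      have hpos : 0 < n := lt_of_le_of_lt (Nat.zero_le _) (i 0).isLt
      set j : Fin n := ⟨0, hpos⟩ with hjdef
      have hjv : (j : ℕ) = 0 := rfl
      have hne0 : (π j : ℕ) ≠ (π (i 0) : ℕ) := val_ne_of_ne π (Fin.ne_of_val_ne (by omega))
      have hne1 : (π j : ℕ) ≠ (π (i 1) : ℕ) := val_ne_of_ne π (Fin.ne_of_val_ne (by omega))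
      have hne2 : (π j : ℕ) ≠ (π (i 2) : ℕ) := val_ne_of_ne π (Fin.ne_of_val_ne (by omega))
      have hcase : (π j : ℕ) < (π (i 0) : ℕ) ∨
          ((π (i 0) : ℕ) < (π j : ℕ) ∧ (π j : ℕ) < (π (i 1) : ℕ)) ∨
          ((π (i 1) : ℕ) < (π j : ℕ) ∧ (π j : ℕ) < (π (i 2) : ℕ)) ∨
          (π (i 2) : ℕ) < (π j : ℕ) := by omega
      rcases hcase with h | ⟨ha, hb⟩ | ⟨ha, hb⟩ | h
      · exact hmesh 0 0 (by simp [S18]) ⟨j, by rw [posExt3_zero]; omega,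
          by rw [posExt3_one]; omega, by rw [valExt123_zero]; omega,
          by rw [valExt123_one]; omega⟩
      · exact hmesh 0 1 (by simp [S18]) ⟨j, by rw [posExt3_zero]; omega,
          by rw [posExt3_one]; omega, by rw [valExt123_one]; omega,
          by rw [valExt123_two]; omega⟩
      · exact hmesh 0 2 (by simp [S18]) ⟨j, by rw [posExt3_zero]; omega,
          by rw [posExt3_one]; omega, by rw [valExt123_two]; omega,
          by rw [valExt123_three]; omega⟩
      · exact hmesh 0 3 (by simp [S18]) ⟨j, by rw [posExt3_zero]; omega,
          by rw [posExt3_one]; omega, by rw [valExt123_three]; omega,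
          by rw [valExt123_four]; omega⟩
    · intro j hj0 hj2 hjne
      by_contra hc
      have hj0n : (i 0 : ℕ) < (j : ℕ) := hj0
      have hj2n : (j : ℕ) < (i 2 : ℕ) := hj2
      have hne1 : (π j : ℕ) ≠ (π (i 1) : ℕ) := val_ne_of_ne π hjne
      have hne2 : (π j : ℕ) ≠ (π (i 2) : ℕ) := val_ne_of_ne π (Fin.ne_of_val_ne (by omega))
      have hcn : (π (i 1) : ℕ) < (π j : ℕ) := by
        have := not_lt.mp hc
        have : (π (i 1) : ℕ) ≤ (π j : ℕ) := this
        omega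
      have hjne1 : (j : ℕ) ≠ (i 1 : ℕ) := fun he => hjne (Fin.val_injective he)
      rcases lt_or_gt_of_ne hjne1 with hlt | hgt
      · rcases lt_or_gt_of_ne hne2 with hv | hv
        · exact hmesh 1 2 (by simp [S18]) ⟨j, by rw [posExt3_one]; omega,
            by rw [posExt3_two]; omega, by rw [valExt123_two]; omega,
            by rw [valExt123_three]; omega⟩
        · exact hmesh 1 3 (by simp [S18]) ⟨j, by rw [posExt3_one]; omega,
            by rw [posExt3_two]; omega, by rw [valExt123_three]; omega,
            by rw [valExt123_four]; omega⟩
      · rcases lt_or_gt_of_ne hne2 with hv | hv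
        · exact hmesh 2 2 (by simp [S18]) ⟨j, by rw [posExt3_two]; omega,
            by rw [posExt3_three]; omega, by rw [valExt123_two]; omega,
            by rw [valExt123_three]; omega⟩
        · exact hmesh 2 3 (by simp [S18]) ⟨j, by rw [posExt3_two]; omega,
            by rw [posExt3_three]; omega, by rw [valExt123_three]; omega,
            by rw [valExt123_four]; omega⟩
  · rintro ⟨h0, h01, h12, hv01, hv12, hlast⟩
    have h01n : (i 0 : ℕ) < (i 1 : ℕ) := h01
    have h12n : (i 1 : ℕ) < (i 2 : ℕ) := h12
    have hv01n : (π (i 0) : ℕ) < (π (i 1) : ℕ) := hv01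
    have hv12n : (π (i 1) : ℕ) < (π (i 2) : ℕ) := hv12
    refine ⟨⟨h01, h12⟩, ⟨hv01, hv12⟩, ?_⟩
    intro a b hab
    rintro ⟨j, hj1, hj2, hj3, hj4⟩
    have hlast' : ∀ j : Fin n, (i 0 : ℕ) < (j : ℕ) → (j : ℕ) < (i 2 : ℕ) →
        (j : ℕ) ≠ (i 1 : ℕ) → (π j : ℕ) < (π (i 1) : ℕ) := by
      intro j a1 a2 a3
      exact hlast j a1 a2 (Fin.ne_of_val_ne a3)
    simp only [S18, Set.mem_insert_iff, Set.mem_singleton_iff, Prod.mk.injEq] at hab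
    rcases hab with ⟨rfl, rfl⟩ | ⟨rfl, rfl⟩ | ⟨rfl, rfl⟩ | ⟨rfl, rfl⟩ | ⟨rfl, rfl⟩ |
      ⟨rfl, rfl⟩ | ⟨rfl, rfl⟩ | ⟨rfl, rfl⟩
    · rw [posExt3_zero] at hj1; rw [posExt3_one] at hj2; omega
    · rw [posExt3_zero] at hj1; rw [posExt3_one] at hj2; omega
    · rw [posExt3_zero] at hj1; rw [posExt3_one] at hj2; omega
    · rw [posExt3_zero] at hj1; rw [posExt3_one] at hj2; omega
    · rw [posExt3_one] at hj1; rw [posExt3_two] at hj2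
      rw [valExt123_two] at hj3
      have := hlast' j (by omega) (by omega) (by omega)
      omega
    · rw [posExt3_one] at hj1; rw [posExt3_two] at hj2
      rw [valExt123_three] at hj3
      have := hlast' j (by omega) (by omega) (by omega)
      omega
    · rw [posExt3_two] at hj1; rw [posExt3_three] at hj2
      rw [valExt123_two] at hj3
      have := hlast' j (by omega) (by omega) (by omega)
      omega
    · rw [posExt3_two] at hj1; rw [posExt3_three] at hj2
      rw [valExt123_three] at hj3
      have := hlast' j (by omega) (by omega) (by omega)
      omega

end CharLemmas
section CharLemmas2
variable {n : ℕ} (π : Equiv.Perm (Fin n)) (i : Fin 3 → Fin n)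

lemma char_132_S18 :
    IsMeshOcc perm132 S18 π i ↔
      ((i 0 : ℕ) = 0 ∧ i 0 < i 1 ∧ i 1 < i 2 ∧ π (i 0) < π (i 2) ∧ π (i 2) < π (i 1) ∧
        ∀ j : Fin n, i 0 < j → j < i 2 → j ≠ i 1 → π j < π (i 2)) := by
  unfold IsMeshOcc
  rw [strictMono_fin3', patt132]
  constructor
  · rintro ⟨⟨h01, h12⟩, ⟨hv02, hv21⟩, hmesh⟩
    have h01n : (i 0 : ℕ) < (i 1 : ℕ) := h01
    have h12n : (i 1 : ℕ) < (i 2 : ℕ) := h12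
    have hv02n : (π (i 0) : ℕ) < (π (i 2) : ℕ) := hv02
    have hv21n : (π (i 2) : ℕ) < (π (i 1) : ℕ) := hv21
    refine ⟨?_, h01, h12, hv02, hv21, ?_⟩
    · by_contra h0
      have hn : 0 < (i 0 : ℕ) := Nat.pos_of_ne_zero h0
      have hpos : 0 < n := lt_of_le_of_lt (Nat.zero_le _) (i 0).isLt
      set j : Fin n := ⟨0, hpos⟩ with hjdef
      have hjv : (j : ℕ) = 0 := rfl
      have hne0 : (π j : ℕ) ≠ (π (i 0) : ℕ) := val_ne_of_ne π (Fin.ne_of_val_ne (by omega))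
      have hne1 : (π j : ℕ) ≠ (π (i 1) : ℕ) := val_ne_of_ne π (Fin.ne_of_val_ne (by omega))
      have hne2 : (π j : ℕ) ≠ (π (i 2) : ℕ) := val_ne_of_ne π (Fin.ne_of_val_ne (by omega))
      have hcase : (π j : ℕ) < (π (i 0) : ℕ) ∨
          ((π (i 0) : ℕ) < (π j : ℕ) ∧ (π j : ℕ) < (π (i 2) : ℕ)) ∨
          ((π (i 2) : ℕ) < (π j : ℕ) ∧ (π j : ℕ) < (π (i 1) : ℕ)) ∨
          (π (i 1) : ℕ) < (π j : ℕ) := by omega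
      rcases hcase with h | ⟨ha, hb⟩ | ⟨ha, hb⟩ | h
      · exact hmesh 0 0 (by simp [S18]) ⟨j, by rw [posExt3_zero]; omega,
          by rw [posExt3_one]; omega, by rw [valExt132_zero]; omega,
          by rw [valExt132_one]; omega⟩
      · exact hmesh 0 1 (by simp [S18]) ⟨j, by rw [posExt3_zero]; omega,
          by rw [posExt3_one]; omega, by rw [valExt132_one]; omega,
          by rw [valExt132_two]; omega⟩
      · exact hmesh 0 2 (by simp [S18]) ⟨j, by rw [posExt3_zero]; omega,
          by rw [posExt3_one]; omega, by rw [valExt132_two]; omega,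
          by rw [valExt132_three]; omega⟩
      · exact hmesh 0 3 (by simp [S18]) ⟨j, by rw [posExt3_zero]; omega,
          by rw [posExt3_one]; omega, by rw [valExt132_three]; omega,
          by rw [valExt132_four]; omega⟩
    · intro j hj0 hj2 hjne
      by_contra hc
      have hj0n : (i 0 : ℕ) < (j : ℕ) := hj0
      have hj2n : (j : ℕ) < (i 2 : ℕ) := hj2
      have hne1 : (π j : ℕ) ≠ (π (i 1) : ℕ) := val_ne_of_ne π hjne
      have hne2 : (π j : ℕ) ≠ (π (i 2) : ℕ) := val_ne_of_ne π (Fin.ne_of_val_ne (by omega))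
      have hcn : (π (i 2) : ℕ) < (π j : ℕ) := by
        have : (π (i 2) : ℕ) ≤ (π j : ℕ) := not_lt.mp hc
        omega
      have hjne1 : (j : ℕ) ≠ (i 1 : ℕ) := fun he => hjne (Fin.val_injective he)
      rcases lt_or_gt_of_ne hjne1 with hlt | hgt
      · rcases lt_or_gt_of_ne hne1 with hv | hv
        · exact hmesh 1 2 (by simp [S18]) ⟨j, by rw [posExt3_one]; omega,
            by rw [posExt3_two]; omega, by rw [valExt132_two]; omega,
            by rw [valExt132_three]; omega⟩
        · exact hmesh 1 3 (by simp [S18]) ⟨j, by rw [posExt3_one]; omega,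
            by rw [posExt3_two]; omega, by rw [valExt132_three]; omega,
            by rw [valExt132_four]; omega⟩
      · rcases lt_or_gt_of_ne hne1 with hv | hv
        · exact hmesh 2 2 (by simp [S18]) ⟨j, by rw [posExt3_two]; omega,
            by rw [posExt3_three]; omega, by rw [valExt132_two]; omega,
            by rw [valExt132_three]; omega⟩
        · exact hmesh 2 3 (by simp [S18]) ⟨j, by rw [posExt3_two]; omega,
            by rw [posExt3_three]; omega, by rw [valExt132_three]; omega,
            by rw [valExt132_four]; omega⟩
  · rintro ⟨h0, h01, h12, hv02, hv21, hlast⟩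
    have h01n : (i 0 : ℕ) < (i 1 : ℕ) := h01
    have h12n : (i 1 : ℕ) < (i 2 : ℕ) := h12
    have hv02n : (π (i 0) : ℕ) < (π (i 2) : ℕ) := hv02
    have hv21n : (π (i 2) : ℕ) < (π (i 1) : ℕ) := hv21
    refine ⟨⟨h01, h12⟩, ⟨hv02, hv21⟩, ?_⟩
    intro a b hab
    rintro ⟨j, hj1, hj2, hj3, hj4⟩
    have hlast' : ∀ j : Fin n, (i 0 : ℕ) < (j : ℕ) → (j : ℕ) < (i 2 : ℕ) →
        (j : ℕ) ≠ (i 1 : ℕ) → (π j : ℕ) < (π (i 2) : ℕ) := by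
      intro j a1 a2 a3
      exact hlast j a1 a2 (Fin.ne_of_val_ne a3)
    simp only [S18, Set.mem_insert_iff, Set.mem_singleton_iff, Prod.mk.injEq] at hab
    rcases hab with ⟨rfl, rfl⟩ | ⟨rfl, rfl⟩ | ⟨rfl, rfl⟩ | ⟨rfl, rfl⟩ | ⟨rfl, rfl⟩ |
      ⟨rfl, rfl⟩ | ⟨rfl, rfl⟩ | ⟨rfl, rfl⟩
    · rw [posExt3_zero] at hj1; rw [posExt3_one] at hj2; omega
    · rw [posExt3_zero] at hj1; rw [posExt3_one] at hj2; omega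
    · rw [posExt3_zero] at hj1; rw [posExt3_one] at hj2; omega
    · rw [posExt3_zero] at hj1; rw [posExt3_one] at hj2; omega
    · rw [posExt3_one] at hj1; rw [posExt3_two] at hj2
      rw [valExt132_two] at hj3
      have := hlast' j (by omega) (by omega) (by omega)
      omega
    · rw [posExt3_one] at hj1; rw [posExt3_two] at hj2
      rw [valExt132_three] at hj3
      have := hlast' j (by omega) (by omega) (by omega)
      omega
    · rw [posExt3_two] at hj1; rw [posExt3_three] at hj2
      rw [valExt132_two] at hj3
      have := hlast' j (by omega) (by omega) (by omega)
      omega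
    · rw [posExt3_two] at hj1; rw [posExt3_three] at hj2
      rw [valExt132_three] at hj3
      have := hlast' j (by omega) (by omega) (by omega)
      omega

end CharLemmas2
section CharLemmas3
variable {n : ℕ} (π : Equiv.Perm (Fin n)) (i : Fin 3 → Fin n)

lemma char_123_S17 :
    IsMeshOcc perm123 S17 π i ↔
      ((i 0 : ℕ) = 0 ∧ i 0 < i 1 ∧ i 1 < i 2 ∧ π (i 0) < π (i 1) ∧ π (i 1) < π (i 2) ∧
        ∀ j : Fin n, i 1 < j → j ≠ i 2 → ¬(π (i 0) < π j ∧ π j < π (i 2))) := by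
  unfold IsMeshOcc
  rw [strictMono_fin3', patt123]
  constructor
  · rintro ⟨⟨h01, h12⟩, ⟨hv01, hv12⟩, hmesh⟩
    have h01n : (i 0 : ℕ) < (i 1 : ℕ) := h01
    have h12n : (i 1 : ℕ) < (i 2 : ℕ) := h12
    have hv01n : (π (i 0) : ℕ) < (π (i 1) : ℕ) := hv01
    have hv12n : (π (i 1) : ℕ) < (π (i 2) : ℕ) := hv12
    refine ⟨?_, h01, h12, hv01, hv12, ?_⟩
    · by_contra h0
      have hn : 0 < (i 0 : ℕ) := Nat.pos_of_ne_zero h0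
      have hpos : 0 < n := lt_of_le_of_lt (Nat.zero_le _) (i 0).isLt
      set j : Fin n := ⟨0, hpos⟩ with hjdef
      have hjv : (j : ℕ) = 0 := rfl
      have hne0 : (π j : ℕ) ≠ (π (i 0) : ℕ) := val_ne_of_ne π (Fin.ne_of_val_ne (by omega))
      have hne1 : (π j : ℕ) ≠ (π (i 1) : ℕ) := val_ne_of_ne π (Fin.ne_of_val_ne (by omega))
      have hne2 : (π j : ℕ) ≠ (π (i 2) : ℕ) := val_ne_of_ne π (Fin.ne_of_val_ne (by omega))
      have hcase : (π j : ℕ) < (π (i 0) : ℕ) ∨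
          ((π (i 0) : ℕ) < (π j : ℕ) ∧ (π j : ℕ) < (π (i 1) : ℕ)) ∨
          ((π (i 1) : ℕ) < (π j : ℕ) ∧ (π j : ℕ) < (π (i 2) : ℕ)) ∨
          (π (i 2) : ℕ) < (π j : ℕ) := by omega
      rcases hcase with h | ⟨ha, hb⟩ | ⟨ha, hb⟩ | h
      · exact hmesh 0 0 (by simp [S17]) ⟨j, by rw [posExt3_zero]; omega,
          by rw [posExt3_one]; omega, by rw [valExt123_zero]; omega,
          by rw [valExt123_one]; omega⟩
      · exact hmesh 0 1 (by simp [S17]) ⟨j, by rw [posExt3_zero]; omega,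
          by rw [posExt3_one]; omega, by rw [valExt123_one]; omega,
          by rw [valExt123_two]; omega⟩
      · exact hmesh 0 2 (by simp [S17]) ⟨j, by rw [posExt3_zero]; omega,
          by rw [posExt3_one]; omega, by rw [valExt123_two]; omega,
          by rw [valExt123_three]; omega⟩
      · exact hmesh 0 3 (by simp [S17]) ⟨j, by rw [posExt3_zero]; omega,
          by rw [posExt3_one]; omega, by rw [valExt123_three]; omega,
          by rw [valExt123_four]; omega⟩
    · rintro j hj1 hjne ⟨ha, hb⟩
      have hj1n : (i 1 : ℕ) < (j : ℕ) := hj1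
      have han : (π (i 0) : ℕ) < (π j : ℕ) := ha
      have hbn : (π j : ℕ) < (π (i 2) : ℕ) := hb
      have hne1 : (π j : ℕ) ≠ (π (i 1) : ℕ) :=
        val_ne_of_ne π (Fin.ne_of_val_ne (by omega))
      have hjne2 : (j : ℕ) ≠ (i 2 : ℕ) := fun he => hjne (Fin.val_injective he)
      rcases lt_or_gt_of_ne hjne2 with hlt | hgt
      · rcases lt_or_gt_of_ne hne1 with hv | hv
        · exact hmesh 2 1 (by simp [S17]) ⟨j, by rw [posExt3_two]; omega,
            by rw [posExt3_three]; omega, by rw [valExt123_one]; omega,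
            by rw [valExt123_two]; omega⟩
        · exact hmesh 2 2 (by simp [S17]) ⟨j, by rw [posExt3_two]; omega,
            by rw [posExt3_three]; omega, by rw [valExt123_two]; omega,
            by rw [valExt123_three]; omega⟩
      · rcases lt_or_gt_of_ne hne1 with hv | hv
        · exact hmesh 3 1 (by simp [S17]) ⟨j, by rw [posExt3_three]; omega,
            by rw [posExt3_four]; omega, by rw [valExt123_one]; omega,
            by rw [valExt123_two]; omega⟩
        · exact hmesh 3 2 (by simp [S17]) ⟨j, by rw [posExt3_three]; omega,
            by rw [posExt3_four]; omega, by rw [valExt123_two]; omega,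
            by rw [valExt123_three]; omega⟩
  · rintro ⟨h0, h01, h12, hv01, hv12, hlast⟩
    have h01n : (i 0 : ℕ) < (i 1 : ℕ) := h01
    have h12n : (i 1 : ℕ) < (i 2 : ℕ) := h12
    have hv01n : (π (i 0) : ℕ) < (π (i 1) : ℕ) := hv01
    have hv12n : (π (i 1) : ℕ) < (π (i 2) : ℕ) := hv12
    refine ⟨⟨h01, h12⟩, ⟨hv01, hv12⟩, ?_⟩
    intro a b hab
    rintro ⟨j, hj1, hj2, hj3, hj4⟩
    have hlast' : ∀ j : Fin n, (i 1 : ℕ) < (j : ℕ) → (j : ℕ) ≠ (i 2 : ℕ) →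
        ¬((π (i 0) : ℕ) < (π j : ℕ) ∧ (π j : ℕ) < (π (i 2) : ℕ)) := by
      intro j a1 a2 hcontra
      exact hlast j a1 (Fin.ne_of_val_ne a2) ⟨hcontra.1, hcontra.2⟩
    simp only [S17, Set.mem_insert_iff, Set.mem_singleton_iff, Prod.mk.injEq] at hab
    rcases hab with ⟨rfl, rfl⟩ | ⟨rfl, rfl⟩ | ⟨rfl, rfl⟩ | ⟨rfl, rfl⟩ | ⟨rfl, rfl⟩ |
      ⟨rfl, rfl⟩ | ⟨rfl, rfl⟩ | ⟨rfl, rfl⟩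
    · rw [posExt3_zero] at hj1; rw [posExt3_one] at hj2; omega
    · rw [posExt3_zero] at hj1; rw [posExt3_one] at hj2; omega
    · rw [posExt3_zero] at hj1; rw [posExt3_one] at hj2; omega
    · rw [posExt3_zero] at hj1; rw [posExt3_one] at hj2; omega
    · rw [posExt3_two] at hj1; rw [posExt3_three] at hj2
      rw [valExt123_one] at hj3; rw [valExt123_two] at hj4
      have := hlast' j (by omega) (by omega)
      omega
    · rw [posExt3_two] at hj1; rw [posExt3_three] at hj2
      rw [valExt123_two] at hj3; rw [valExt123_three] at hj4
      have := hlast' j (by omega) (by omega)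
      omega
    · rw [posExt3_three] at hj1; rw [posExt3_four] at hj2
      rw [valExt123_one] at hj3; rw [valExt123_two] at hj4
      have := hlast' j (by omega) (by omega)
      omega
    · rw [posExt3_three] at hj1; rw [posExt3_four] at hj2
      rw [valExt123_two] at hj3; rw [valExt123_three] at hj4
      have := hlast' j (by omega) (by omega)
      omega

lemma char_132_S17 :
    IsMeshOcc perm132 S17 π i ↔
      ((i 0 : ℕ) = 0 ∧ i 0 < i 1 ∧ i 1 < i 2 ∧ π (i 0) < π (i 2) ∧ π (i 2) < π (i 1) ∧
        ∀ j : Fin n, i 1 < j → j ≠ i 2 → ¬(π (i 0) < π j ∧ π j < π (i 1))) := by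
  unfold IsMeshOcc
  rw [strictMono_fin3', patt132]
  constructor
  · rintro ⟨⟨h01, h12⟩, ⟨hv02, hv21⟩, hmesh⟩
    have h01n : (i 0 : ℕ) < (i 1 : ℕ) := h01
    have h12n : (i 1 : ℕ) < (i 2 : ℕ) := h12
    have hv02n : (π (i 0) : ℕ) < (π (i 2) : ℕ) := hv02
    have hv21n : (π (i 2) : ℕ) < (π (i 1) : ℕ) := hv21
    refine ⟨?_, h01, h12, hv02, hv21, ?_⟩
    · by_contra h0
      have hn : 0 < (i 0 : ℕ) := Nat.pos_of_ne_zero h0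
      have hpos : 0 < n := lt_of_le_of_lt (Nat.zero_le _) (i 0).isLt
      set j : Fin n := ⟨0, hpos⟩ with hjdef
      have hjv : (j : ℕ) = 0 := rfl
      have hne0 : (π j : ℕ) ≠ (π (i 0) : ℕ) := val_ne_of_ne π (Fin.ne_of_val_ne (by omega))
      have hne1 : (π j : ℕ) ≠ (π (i 1) : ℕ) := val_ne_of_ne π (Fin.ne_of_val_ne (by omega))
      have hne2 : (π j : ℕ) ≠ (π (i 2) : ℕ) := val_ne_of_ne π (Fin.ne_of_val_ne (by omega))
      have hcase : (π j : ℕ) < (π (i 0) : ℕ) ∨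
          ((π (i 0) : ℕ) < (π j : ℕ) ∧ (π j : ℕ) < (π (i 2) : ℕ)) ∨
          ((π (i 2) : ℕ) < (π j : ℕ) ∧ (π j : ℕ) < (π (i 1) : ℕ)) ∨
          (π (i 1) : ℕ) < (π j : ℕ) := by omega
      rcases hcase with h | ⟨ha, hb⟩ | ⟨ha, hb⟩ | h
      · exact hmesh 0 0 (by simp [S17]) ⟨j, by rw [posExt3_zero]; omega,
          by rw [posExt3_one]; omega, by rw [valExt132_zero]; omega,
          by rw [valExt132_one]; omega⟩
      · exact hmesh 0 1 (by simp [S17]) ⟨j, by rw [posExt3_zero]; omega,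
          by rw [posExt3_one]; omega, by rw [valExt132_one]; omega,
          by rw [valExt132_two]; omega⟩
      · exact hmesh 0 2 (by simp [S17]) ⟨j, by rw [posExt3_zero]; omega,
          by rw [posExt3_one]; omega, by rw [valExt132_two]; omega,
          by rw [valExt132_three]; omega⟩
      · exact hmesh 0 3 (by simp [S17]) ⟨j, by rw [posExt3_zero]; omega,
          by rw [posExt3_one]; omega, by rw [valExt132_three]; omega,
          by rw [valExt132_four]; omega⟩
    · rintro j hj1 hjne ⟨ha, hb⟩
      have hj1n : (i 1 : ℕ) < (j : ℕ) := hj1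
      have han : (π (i 0) : ℕ) < (π j : ℕ) := ha
      have hbn : (π j : ℕ) < (π (i 1) : ℕ) := hb
      have hne2 : (π j : ℕ) ≠ (π (i 2) : ℕ) := val_ne_of_ne π hjne
      have hjne2 : (j : ℕ) ≠ (i 2 : ℕ) := fun he => hjne (Fin.val_injective he)
      rcases lt_or_gt_of_ne hjne2 with hlt | hgt
      · rcases lt_or_gt_of_ne hne2 with hv | hv
        · exact hmesh 2 1 (by simp [S17]) ⟨j, by rw [posExt3_two]; omega,
            by rw [posExt3_three]; omega, by rw [valExt132_one]; omega,
            by rw [valExt132_two]; omega⟩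
        · exact hmesh 2 2 (by simp [S17]) ⟨j, by rw [posExt3_two]; omega,
            by rw [posExt3_three]; omega, by rw [valExt132_two]; omega,
            by rw [valExt132_three]; omega⟩
      · rcases lt_or_gt_of_ne hne2 with hv | hv
        · exact hmesh 3 1 (by simp [S17]) ⟨j, by rw [posExt3_three]; omega,
            by rw [posExt3_four]; omega, by rw [valExt132_one]; omega,
            by rw [valExt132_two]; omega⟩
        · exact hmesh 3 2 (by simp [S17]) ⟨j, by rw [posExt3_three]; omega,
            by rw [posExt3_four]; omega, by rw [valExt132_two]; omega,
            by rw [valExt132_three]; omega⟩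
  · rintro ⟨h0, h01, h12, hv02, hv21, hlast⟩
    have h01n : (i 0 : ℕ) < (i 1 : ℕ) := h01
    have h12n : (i 1 : ℕ) < (i 2 : ℕ) := h12
    have hv02n : (π (i 0) : ℕ) < (π (i 2) : ℕ) := hv02
    have hv21n : (π (i 2) : ℕ) < (π (i 1) : ℕ) := hv21
    refine ⟨⟨h01, h12⟩, ⟨hv02, hv21⟩, ?_⟩
    intro a b hab
    rintro ⟨j, hj1, hj2, hj3, hj4⟩
    have hlast' : ∀ j : Fin n, (i 1 : ℕ) < (j : ℕ) → (j : ℕ) ≠ (i 2 : ℕ) →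
        ¬((π (i 0) : ℕ) < (π j : ℕ) ∧ (π j : ℕ) < (π (i 1) : ℕ)) := by
      intro j a1 a2 hcontra
      exact hlast j a1 (Fin.ne_of_val_ne a2) ⟨hcontra.1, hcontra.2⟩
    simp only [S17, Set.mem_insert_iff, Set.mem_singleton_iff, Prod.mk.injEq] at hab
    rcases hab with ⟨rfl, rfl⟩ | ⟨rfl, rfl⟩ | ⟨rfl, rfl⟩ | ⟨rfl, rfl⟩ | ⟨rfl, rfl⟩ |
      ⟨rfl, rfl⟩ | ⟨rfl, rfl⟩ | ⟨rfl, rfl⟩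
    · rw [posExt3_zero] at hj1; rw [posExt3_one] at hj2; omega
    · rw [posExt3_zero] at hj1; rw [posExt3_one] at hj2; omega
    · rw [posExt3_zero] at hj1; rw [posExt3_one] at hj2; omega
    · rw [posExt3_zero] at hj1; rw [posExt3_one] at hj2; omega
    · rw [posExt3_two] at hj1; rw [posExt3_three] at hj2
      rw [valExt132_one] at hj3; rw [valExt132_two] at hj4
      have := hlast' j (by omega) (by omega)
      omega
    · rw [posExt3_two] at hj1; rw [posExt3_three] at hj2
      rw [valExt132_two] at hj3; rw [valExt132_three] at hj4
      have := hlast' j (by omega) (by omega)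
      omega
    · rw [posExt3_three] at hj1; rw [posExt3_four] at hj2
      rw [valExt132_one] at hj3; rw [valExt132_two] at hj4
      have := hlast' j (by omega) (by omega)
      omega
    · rw [posExt3_three] at hj1; rw [posExt3_four] at hj2
      rw [valExt132_two] at hj3; rw [valExt132_three] at hj4
      have := hlast' j (by omega) (by omega)
      omega

end CharLemmas3
section PhiHat
variable {n : ℕ}

/-- number of "big" positions strictly before `p`. -/
def bigCnt (π : Equiv.Perm (Fin (n+1))) (p : Fin (n+1)) : ℕ :=
  (Finset.univ.filter (fun q => q < p ∧ π 0 < π q)).card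

lemma bigTotal (π : Equiv.Perm (Fin (n+1))) :
    (Finset.univ.filter (fun q => π 0 < π q)).card = n - (π 0 : ℕ) := by
  have h1 : (Finset.univ.filter (fun q : Fin (n+1) => π 0 < π q)).card
      = (Finset.univ.filter (fun v : Fin (n+1) => π 0 < v)).card := by
    apply Finset.card_bij (fun q _ => π q)
    · intro a ha
      simp only [Finset.mem_filter, Finset.mem_univ, true_and] at ha ⊢
      exact ha
    · intro a _ b _ he
      exact π.injective he
    · intro v hv
      simp only [Finset.mem_filter, Finset.mem_univ, true_and] at hv ⊢
      exact ⟨π.symm v, by simp [hv], by simp⟩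
  rw [h1]
  have h2 : (Finset.univ.filter (fun v : Fin (n+1) => π 0 < v)) = Finset.Ioi (π 0) := by
    ext v
    simp
  rw [h2, Fin.card_Ioi]
  omega

lemma bigCnt_lt (π : Equiv.Perm (Fin (n+1))) (p : Fin (n+1)) (hp : π 0 < π p) :
    (π 0 : ℕ) + 1 + bigCnt π p < n + 1 := by
  have hsub : (Finset.univ.filter (fun q => q < p ∧ π 0 < π q))
      ⊂ (Finset.univ.filter (fun q : Fin (n+1) => π 0 < π q)) := by
    constructor
    · intro q hq
      simp only [Finset.mem_filter, Finset.mem_univ, true_and] at hq ⊢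
      exact hq.2
    · intro hsup
      have := hsup (Finset.mem_filter.mpr ⟨Finset.mem_univ p, hp⟩)
      simp only [Finset.mem_filter, Finset.mem_univ, true_and] at this
      exact lt_irrefl p this.1
  have hlt := Finset.card_lt_card hsub
  rw [bigTotal] at hlt
  have hx : (π 0 : ℕ) < (π p : ℕ) := hp
  have := (π p).isLt
  unfold bigCnt
  omega

/-- the underlying function of the "patch" permutation Φ̂ -/
def phiFun (π : Equiv.Perm (Fin (n+1))) : Fin (n+1) → Fin (n+1) := fun p =>
  if h : π 0 < π p then ⟨(π 0 : ℕ) + 1 + bigCnt π p, bigCnt_lt π p h⟩ else π p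

lemma phiFun_small (π : Equiv.Perm (Fin (n+1))) (p : Fin (n+1)) (h : ¬ π 0 < π p) :
    phiFun π p = π p := by
  simp [phiFun, h]

lemma phiFun_big (π : Equiv.Perm (Fin (n+1))) (p : Fin (n+1)) (h : π 0 < π p) :
    (phiFun π p : ℕ) = (π 0 : ℕ) + 1 + bigCnt π p := by
  simp [phiFun, h]

lemma bigCnt_strictMono (π : Equiv.Perm (Fin (n+1))) {p q : Fin (n+1)}
    (hp : π 0 < π p) (hpq : p < q) : bigCnt π p < bigCnt π q := by
  apply Finset.card_lt_card
  constructor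
  · intro r hr
    simp only [Finset.mem_filter, Finset.mem_univ, true_and] at hr ⊢
    exact ⟨lt_trans hr.1 hpq, hr.2⟩
  · intro hsup
    have := hsup (Finset.mem_filter.mpr ⟨Finset.mem_univ p, ⟨hpq, hp⟩⟩)
    simp only [Finset.mem_filter, Finset.mem_univ, true_and] at this
    exact lt_irrefl p this.1

lemma phiFun_injective (π : Equiv.Perm (Fin (n+1))) : Function.Injective (phiFun π) := by
  intro p q he
  by_cases hp : π 0 < π p <;> by_cases hq : π 0 < π q
  · rcases lt_trichotomy p q with h | h | h
    · have := bigCnt_strictMono π hp h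
      have hv : (phiFun π p : ℕ) = (phiFun π q : ℕ) := by rw [he]
      rw [phiFun_big π p hp, phiFun_big π q hq] at hv
      omega
    · exact h
    · have := bigCnt_strictMono π hq h
      have hv : (phiFun π p : ℕ) = (phiFun π q : ℕ) := by rw [he]
      rw [phiFun_big π p hp, phiFun_big π q hq] at hv
      omega
  · exfalso
    have hv : (phiFun π p : ℕ) = (phiFun π q : ℕ) := by rw [he]
    rw [phiFun_big π p hp, phiFun_small π q hq] at hv
    have : (π q : ℕ) ≤ (π 0 : ℕ) := not_lt.mp hq
    omega
  · exfalso
    have hv : (phiFun π p : ℕ) = (phiFun π q : ℕ) := by rw [he]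
    rw [phiFun_small π p hp, phiFun_big π q hq] at hv
    have : (π p : ℕ) ≤ (π 0 : ℕ) := not_lt.mp hp
    omega
  · rw [phiFun_small π p hp, phiFun_small π q hq] at he
    exact π.injective he

/-- The permutation Φ̂. -/
noncomputable def phiHat (π : Equiv.Perm (Fin (n+1))) : Equiv.Perm (Fin (n+1)) :=
  Equiv.ofBijective (phiFun π) ((Finite.injective_iff_bijective).mp (phiFun_injective π))

lemma phiHat_apply (π : Equiv.Perm (Fin (n+1))) (p : Fin (n+1)) : phiHat π p = phiFun π p := rfl

/-- The partial-inverse involution. -/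
noncomputable def Finv (π : Equiv.Perm (Fin (n+1))) : Equiv.Perm (Fin (n+1)) :=
  (phiHat π).trans (π.symm.trans (phiHat π))

lemma Finv_apply (π : Equiv.Perm (Fin (n+1))) (p : Fin (n+1)) :
    Finv π p = phiHat π (π.symm (phiHat π p)) := rfl

lemma phiHat_zero (π : Equiv.Perm (Fin (n+1))) : phiHat π 0 = π 0 := by
  rw [phiHat_apply, phiFun_small]
  exact lt_irrefl _
section FinvLemmas
variable {n : ℕ}

lemma phiHat_big_val (π : Equiv.Perm (Fin (n+1))) (p : Fin (n+1)) (h : π 0 < π p) :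
    (π 0 : ℕ) < (phiHat π p : ℕ) := by
  rw [phiHat_apply, phiFun_big π p h]
  omega

lemma phiHat_big_iff (π : Equiv.Perm (Fin (n+1))) (p : Fin (n+1)) :
    π 0 < π p ↔ π 0 < phiHat π p := by
  constructor
  · intro h
    exact phiHat_big_val π p h
  · intro h
    by_contra hs
    rw [phiHat_apply, phiFun_small π p hs] at h
    exact hs h

lemma phiHat_lt_iff (π : Equiv.Perm (Fin (n+1))) {p q : Fin (n+1)}
    (hp : π 0 < π p) (hq : π 0 < π q) : p < q ↔ phiHat π p < phiHat π q := by
  constructor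
  · intro h
    have := bigCnt_strictMono π hp h
    have e1 := phiFun_big π p hp
    have e2 := phiFun_big π q hq
    rw [phiHat_apply, phiHat_apply]
    exact Fin.lt_def.mpr (by omega)
  · intro h
    rcases lt_trichotomy p q with h' | h' | h'
    · exact h'
    · subst h'; exact absurd h (lt_irrefl _)
    · have := bigCnt_strictMono π hq h'
      have e1 := phiFun_big π p hp
      have e2 := phiFun_big π q hq
      rw [phiHat_apply, phiHat_apply, Fin.lt_def] at h
      omega

lemma Finv_zero (π : Equiv.Perm (Fin (n+1))) : Finv π 0 = π 0 := by
  rw [Finv_apply, phiHat_zero, Equiv.symm_apply_apply, phiHat_zero]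

lemma Finv_small (π : Equiv.Perm (Fin (n+1))) (p : Fin (n+1)) (h : ¬ π 0 < π p) :
    Finv π p = π p := by
  rw [Finv_apply, phiHat_apply π p, phiFun_small π p h, Equiv.symm_apply_apply,
    phiHat_apply, phiFun_small π p h]

lemma Finv_big_iff (π : Equiv.Perm (Fin (n+1))) (p : Fin (n+1)) :
    π 0 < π p ↔ π 0 < Finv π p := by
  constructor
  · intro h
    have h1 : π 0 < phiHat π p := (phiHat_big_iff π p).mp h
    have h2 : π 0 < π (π.symm (phiHat π p)) := by
      rw [Equiv.apply_symm_apply]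
      exact h1
    have h3 : π 0 < phiHat π (π.symm (phiHat π p)) := (phiHat_big_iff π _).mp h2
    rw [Finv_apply]
    exact h3
  · intro h
    by_contra hs
    rw [Finv_small π p hs] at h
    exact hs h

lemma key1 (π : Equiv.Perm (Fin (n+1))) (p : Fin (n+1)) :
    Finv π ((phiHat π).symm (π p)) = phiHat π p := by
  rw [Finv_apply, Equiv.apply_symm_apply, Equiv.symm_apply_apply]

lemma phiHat_Finv (π : Equiv.Perm (Fin (n+1))) : phiHat (Finv π) = phiHat π := by
  apply Equiv.ext
  intro p
  rw [phiHat_apply, phiHat_apply]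
  by_cases hbig : π 0 < π p
  · have h2 : Finv π 0 < Finv π p := by
      rw [Finv_zero]
      exact (Finv_big_iff π p).mp hbig
    have e1 := phiFun_big (Finv π) p h2
    have e2 := phiFun_big π p hbig
    have hcnt : bigCnt (Finv π) p = bigCnt π p := by
      unfold bigCnt
      congr 1
      apply Finset.filter_congr
      intro q _
      rw [Finv_zero]
      exact and_congr_right fun _ => (Finv_big_iff π q).symm
    apply Fin.val_injective
    rw [e1, e2, hcnt, Finv_zero]
  · have h2 : ¬ Finv π 0 < Finv π p := by
      rw [Finv_zero]
      intro hc
      exact hbig ((Finv_big_iff π p).mpr hc)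
    rw [phiFun_small (Finv π) p h2, phiFun_small π p hbig, Finv_small π p hbig]

lemma Finv_invol (π : Equiv.Perm (Fin (n+1))) : Finv (Finv π) = π := by
  apply Equiv.ext
  intro p
  rw [Finv_apply, phiHat_Finv]
  have hsymm : (Finv π).symm (phiHat π p) = (phiHat π).symm (π ((phiHat π).symm (phiHat π p))) := by
    simp [Finv]
  rw [hsymm, Equiv.symm_apply_apply, Equiv.apply_symm_apply]

lemma big_pos (π : Equiv.Perm (Fin (n+1))) {p : Fin (n+1)} (h : π 0 < π p) :
    (0 : Fin (n+1)) < p :=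
  Fin.pos_of_ne_zero (fun he => absurd (he ▸ h) (lt_irrefl _))

end FinvLemmas
section OccMaps
variable {n : ℕ}

noncomputable def occMap123 (π : Equiv.Perm (Fin (n+1))) (i : Fin 3 → Fin (n+1)) :
    Fin 3 → Fin (n+1) :=
  ![0, (phiHat π).symm (π (i 1)), (phiHat π).symm (π (i 2))]

noncomputable def occMap132 (π : Equiv.Perm (Fin (n+1))) (i : Fin 3 → Fin (n+1)) :
    Fin 3 → Fin (n+1) :=
  ![0, (phiHat π).symm (π (i 2)), (phiHat π).symm (π (i 1))]

lemma occMap123_0 (π : Equiv.Perm (Fin (n+1))) (i : Fin 3 → Fin (n+1)) :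
    occMap123 π i 0 = 0 := rfl
lemma occMap123_1 (π : Equiv.Perm (Fin (n+1))) (i : Fin 3 → Fin (n+1)) :
    occMap123 π i 1 = (phiHat π).symm (π (i 1)) := rfl
lemma occMap123_2 (π : Equiv.Perm (Fin (n+1))) (i : Fin 3 → Fin (n+1)) :
    occMap123 π i 2 = (phiHat π).symm (π (i 2)) := rfl
lemma occMap132_0 (π : Equiv.Perm (Fin (n+1))) (i : Fin 3 → Fin (n+1)) :
    occMap132 π i 0 = 0 := rfl
lemma occMap132_1 (π : Equiv.Perm (Fin (n+1))) (i : Fin 3 → Fin (n+1)) :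
    occMap132 π i 1 = (phiHat π).symm (π (i 2)) := rfl
lemma occMap132_2 (π : Equiv.Perm (Fin (n+1))) (i : Fin 3 → Fin (n+1)) :
    occMap132 π i 2 = (phiHat π).symm (π (i 1)) := rfl

lemma isOcc_map123 (π : Equiv.Perm (Fin (n+1))) (i : Fin 3 → Fin (n+1))
    (h : IsMeshOcc perm123 S18 π i) :
    IsMeshOcc perm123 S17 (Finv π) (occMap123 π i) := by
  rw [char_123_S18] at h
  obtain ⟨h0, h01, h12, hv01, hv12, hlast⟩ := h
  rw [char_123_S17]
  simp only [occMap123_0, occMap123_1, occMap123_2]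
  have hiz : i 0 = 0 := by apply Fin.val_injective; simpa using h0
  set b' := (phiHat π).symm (π (i 1)) with hb'def
  set c' := (phiHat π).symm (π (i 2)) with hc'def
  have hb_big : π 0 < π (i 1) := by rw [← hiz]; exact hv01
  have hc_big : π 0 < π (i 2) := by rw [← hiz]; exact lt_trans hv01 hv12
  have hΦb' : phiHat π b' = π (i 1) := Equiv.apply_symm_apply _ _
  have hΦc' : phiHat π c' = π (i 2) := Equiv.apply_symm_apply _ _
  have hb'_big : π 0 < π b' := (phiHat_big_iff π b').mpr (by rw [hΦb']; exact hb_big)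
  have hc'_big : π 0 < π c' := (phiHat_big_iff π c').mpr (by rw [hΦc']; exact hc_big)
  have hFb : Finv π b' = phiHat π (i 1) := by rw [hb'def]; exact key1 π (i 1)
  have hFc : Finv π c' = phiHat π (i 2) := by rw [hc'def]; exact key1 π (i 2)
  refine ⟨by simp, big_pos π hb'_big, ?_, ?_, ?_, ?_⟩
  · exact (phiHat_lt_iff π hb'_big hc'_big).mpr (by rw [hΦb', hΦc']; exact hv12)
  · rw [Finv_zero, hFb]
    exact (phiHat_big_iff π (i 1)).mp hb_big
  · rw [hFb, hFc]
    exact (phiHat_lt_iff π hb_big hc_big).mp h12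
  · intro j hj hne hcontra
    obtain ⟨hA, hB⟩ := hcontra
    rw [Finv_zero] at hA
    have hj_big : π 0 < π j := (Finv_big_iff π j).mpr hA
    set u := π.symm (phiHat π j) with hudef
    have hπu : π u = phiHat π j := Equiv.apply_symm_apply _ _
    have hu_big : π 0 < π u := by rw [hπu]; exact (phiHat_big_iff π j).mp hj_big
    have hFj : Finv π j = phiHat π u := by rw [hudef]; exact Finv_apply π j
    have huc : u < i 2 := by
      apply (phiHat_lt_iff π hu_big hc_big).mpr
      rw [← hFj, ← hFc]
      exact hB
    have hgt : π (i 1) < π u := by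
      have := (phiHat_lt_iff π hb'_big hj_big).mp hj
      rw [hΦb'] at this
      rw [hπu]
      exact this
    have hune1 : u ≠ i 1 := fun he => lt_irrefl _ (he ▸ hgt)
    have hu0 : (0 : Fin (n+1)) < u := big_pos π hu_big
    have := hlast u (by rw [hiz]; exact hu0) huc hune1
    exact absurd this (not_lt.mpr (le_of_lt hgt))

lemma isOcc_map123' (π : Equiv.Perm (Fin (n+1))) (i : Fin 3 → Fin (n+1))
    (h : IsMeshOcc perm123 S17 π i) :
    IsMeshOcc perm123 S18 (Finv π) (occMap123 π i) := by
  rw [char_123_S17] at h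
  obtain ⟨h0, h01, h12, hv01, hv12, hlast⟩ := h
  rw [char_123_S18]
  simp only [occMap123_0, occMap123_1, occMap123_2]
  have hiz : i 0 = 0 := by apply Fin.val_injective; simpa using h0
  set b := (phiHat π).symm (π (i 1)) with hbdef
  set c := (phiHat π).symm (π (i 2)) with hcdef
  have hb_big : π 0 < π (i 1) := by rw [← hiz]; exact hv01
  have hc_big : π 0 < π (i 2) := by rw [← hiz]; exact lt_trans hv01 hv12
  have hΦb : phiHat π b = π (i 1) := Equiv.apply_symm_apply _ _
  have hΦc : phiHat π c = π (i 2) := Equiv.apply_symm_apply _ _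
  have hb_big' : π 0 < π b := (phiHat_big_iff π b).mpr (by rw [hΦb]; exact hb_big)
  have hc_big' : π 0 < π c := (phiHat_big_iff π c).mpr (by rw [hΦc]; exact hc_big)
  have hFb : Finv π b = phiHat π (i 1) := by rw [hbdef]; exact key1 π (i 1)
  have hFc : Finv π c = phiHat π (i 2) := by rw [hcdef]; exact key1 π (i 2)
  refine ⟨by simp, big_pos π hb_big', ?_, ?_, ?_, ?_⟩
  · exact (phiHat_lt_iff π hb_big' hc_big').mpr (by rw [hΦb, hΦc]; exact hv12)
  · rw [Finv_zero, hFb]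
    exact (phiHat_big_iff π (i 1)).mp hb_big
  · rw [hFb, hFc]
    exact (phiHat_lt_iff π hb_big hc_big).mp h12
  · intro j hj0 hjc hjb
    by_contra hc2
    have h1 : π 0 < Finv π b := by rw [hFb]; exact (phiHat_big_iff π (i 1)).mp hb_big
    have hne : Finv π j ≠ Finv π b := fun he => hjb ((Finv π).injective he)
    have hgt : Finv π b < Finv π j := lt_of_le_of_ne (not_lt.mp hc2) (Ne.symm hne)
    have hjF_big : π 0 < Finv π j := lt_trans h1 hgt
    have hj_big : π 0 < π j := (Finv_big_iff π j).mpr hjF_big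
    set u := π.symm (phiHat π j) with hudef
    have hπu : π u = phiHat π j := Equiv.apply_symm_apply _ _
    have hu_big : π 0 < π u := by rw [hπu]; exact (phiHat_big_iff π j).mp hj_big
    have hFj : Finv π j = phiHat π u := by rw [hudef]; exact Finv_apply π j
    have h1u : i 1 < u := by
      apply (phiHat_lt_iff π hb_big hu_big).mpr
      rw [← hFb, ← hFj]
      exact hgt
    have hune2 : u ≠ i 2 := by
      intro he
      have hjc2 : j = c := by
        apply (Finv π).injective
        rw [hFj, hFc, he]
      rw [hjc2] at hjc
      exact lt_irrefl _ hjc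
    have hval : π u < π (i 2) := by
      rw [hπu, ← hΦc]
      exact (phiHat_lt_iff π hj_big hc_big').mp hjc
    exact hlast u h1u hune2 ⟨by rw [hiz]; exact hu_big, hval⟩

lemma isOcc_map132 (π : Equiv.Perm (Fin (n+1))) (i : Fin 3 → Fin (n+1))
    (h : IsMeshOcc perm132 S18 π i) :
    IsMeshOcc perm132 S17 (Finv π) (occMap132 π i) := by
  rw [char_132_S18] at h
  obtain ⟨h0, h01, h12, hv02, hv21, hlast⟩ := h
  rw [char_132_S17]
  simp only [occMap132_0, occMap132_1, occMap132_2]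
  have hiz : i 0 = 0 := by apply Fin.val_injective; simpa using h0
  set b' := (phiHat π).symm (π (i 2)) with hb'def
  set c' := (phiHat π).symm (π (i 1)) with hc'def
  have h2_big : π 0 < π (i 2) := by rw [← hiz]; exact hv02
  have h1_big : π 0 < π (i 1) := by rw [← hiz]; exact lt_trans hv02 hv21
  have hΦb' : phiHat π b' = π (i 2) := Equiv.apply_symm_apply _ _
  have hΦc' : phiHat π c' = π (i 1) := Equiv.apply_symm_apply _ _
  have hb'_big : π 0 < π b' := (phiHat_big_iff π b').mpr (by rw [hΦb']; exact h2_big)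
  have hc'_big : π 0 < π c' := (phiHat_big_iff π c').mpr (by rw [hΦc']; exact h1_big)
  have hFb : Finv π b' = phiHat π (i 2) := by rw [hb'def]; exact key1 π (i 2)
  have hFc : Finv π c' = phiHat π (i 1) := by rw [hc'def]; exact key1 π (i 1)
  refine ⟨by simp, big_pos π hb'_big, ?_, ?_, ?_, ?_⟩
  · exact (phiHat_lt_iff π hb'_big hc'_big).mpr (by rw [hΦb', hΦc']; exact hv21)
  · rw [Finv_zero, hFc]
    exact (phiHat_big_iff π (i 1)).mp h1_big
  · rw [hFb, hFc]
    exact (phiHat_lt_iff π h1_big h2_big).mp h12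
  · intro j hj hne hcontra
    obtain ⟨hA, hB⟩ := hcontra
    rw [Finv_zero] at hA
    have hj_big : π 0 < π j := (Finv_big_iff π j).mpr hA
    set u := π.symm (phiHat π j) with hudef
    have hπu : π u = phiHat π j := Equiv.apply_symm_apply _ _
    have hu_big : π 0 < π u := by rw [hπu]; exact (phiHat_big_iff π j).mp hj_big
    have hFj : Finv π j = phiHat π u := by rw [hudef]; exact Finv_apply π j
    have huc : u < i 2 := by
      apply (phiHat_lt_iff π hu_big h2_big).mpr
      rw [← hFj, ← hFb]
      exact hB
    have hgt : π (i 2) < π u := by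
      have := (phiHat_lt_iff π hb'_big hj_big).mp hj
      rw [hΦb'] at this
      rw [hπu]
      exact this
    have hune1 : u ≠ i 1 := by
      intro he
      have : phiHat π j = π (i 1) := by rw [← hπu, he]
      have hjeq : j = c' := by
        rw [hc'def, ← this, Equiv.symm_apply_apply]
      exact hne hjeq
    have hu0 : (0 : Fin (n+1)) < u := big_pos π hu_big
    have := hlast u (by rw [hiz]; exact hu0) huc hune1
    exact absurd this (not_lt.mpr (le_of_lt hgt))

lemma isOcc_map132' (π : Equiv.Perm (Fin (n+1))) (i : Fin 3 → Fin (n+1))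
    (h : IsMeshOcc perm132 S17 π i) :
    IsMeshOcc perm132 S18 (Finv π) (occMap132 π i) := by
  rw [char_132_S17] at h
  obtain ⟨h0, h01, h12, hv02, hv21, hlast⟩ := h
  rw [char_132_S18]
  simp only [occMap132_0, occMap132_1, occMap132_2]
  have hiz : i 0 = 0 := by apply Fin.val_injective; simpa using h0
  set b := (phiHat π).symm (π (i 2)) with hbdef
  set c := (phiHat π).symm (π (i 1)) with hcdef
  have h2_big : π 0 < π (i 2) := by rw [← hiz]; exact hv02
  have h1_big : π 0 < π (i 1) := by rw [← hiz]; exact lt_trans hv02 hv21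
  have hΦb : phiHat π b = π (i 2) := Equiv.apply_symm_apply _ _
  have hΦc : phiHat π c = π (i 1) := Equiv.apply_symm_apply _ _
  have hb_big' : π 0 < π b := (phiHat_big_iff π b).mpr (by rw [hΦb]; exact h2_big)
  have hc_big' : π 0 < π c := (phiHat_big_iff π c).mpr (by rw [hΦc]; exact h1_big)
  have hFb : Finv π b = phiHat π (i 2) := by rw [hbdef]; exact key1 π (i 2)
  have hFc : Finv π c = phiHat π (i 1) := by rw [hcdef]; exact key1 π (i 1)
  refine ⟨by simp, big_pos π hb_big', ?_, ?_, ?_, ?_⟩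
  · exact (phiHat_lt_iff π hb_big' hc_big').mpr (by rw [hΦb, hΦc]; exact hv21)
  · rw [Finv_zero, hFc]
    exact (phiHat_big_iff π (i 1)).mp h1_big
  · rw [hFb, hFc]
    exact (phiHat_lt_iff π h1_big h2_big).mp h12
  · intro j hj0 hjc hjb
    by_contra hc2
    have h1 : π 0 < Finv π c := by rw [hFc]; exact (phiHat_big_iff π (i 1)).mp h1_big
    have hne : Finv π j ≠ Finv π c := by
      intro he
      have : j = c := (Finv π).injective he
      rw [this] at hjc
      exact lt_irrefl _ hjc
    have hgt : Finv π c < Finv π j := lt_of_le_of_ne (not_lt.mp hc2) (Ne.symm hne)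
    have hjF_big : π 0 < Finv π j := lt_trans h1 hgt
    have hj_big : π 0 < π j := (Finv_big_iff π j).mpr hjF_big
    set u := π.symm (phiHat π j) with hudef
    have hπu : π u = phiHat π j := Equiv.apply_symm_apply _ _
    have hu_big : π 0 < π u := by rw [hπu]; exact (phiHat_big_iff π j).mp hj_big
    have hFj : Finv π j = phiHat π u := by rw [hudef]; exact Finv_apply π j
    have h1u : i 1 < u := by
      apply (phiHat_lt_iff π h1_big hu_big).mpr
      rw [← hFc, ← hFj]
      exact hgt
    have hune2 : u ≠ i 2 := by
      intro he
      have : phiHat π j = π (i 2) := by rw [← hπu, he]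
      have hjeq : j = b := by
        rw [hbdef, ← this, Equiv.symm_apply_apply]
      exact hjb hjeq
    have hval : π u < π (i 1) := by
      rw [hπu, ← hΦc]
      exact (phiHat_lt_iff π hj_big hc_big').mp hjc
    exact hlast u h1u hune2 ⟨by rw [hiz]; exact hu_big, hval⟩

end OccMaps
section Assembly
variable {n : ℕ}

lemma occMap123_roundtrip (π : Equiv.Perm (Fin (n+1))) (i : Fin 3 → Fin (n+1))
    (h0 : i 0 = 0) : occMap123 (Finv π) (occMap123 π i) = i := by
  have e0 : occMap123 (Finv π) (occMap123 π i) 0 = i 0 := by rw [occMap123_0, h0]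
  have e1 : occMap123 (Finv π) (occMap123 π i) 1 = i 1 := by
    rw [occMap123_1, occMap123_1, phiHat_Finv, key1, Equiv.symm_apply_apply]
  have e2 : occMap123 (Finv π) (occMap123 π i) 2 = i 2 := by
    rw [occMap123_2, occMap123_2, phiHat_Finv, key1, Equiv.symm_apply_apply]
  funext k
  rcases k with ⟨kv, hk⟩
  interval_cases kv
  · exact e0
  · exact e1
  · exact e2

lemma occMap132_roundtrip (π : Equiv.Perm (Fin (n+1))) (i : Fin 3 → Fin (n+1))
    (h0 : i 0 = 0) : occMap132 (Finv π) (occMap132 π i) = i := by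
  have e0 : occMap132 (Finv π) (occMap132 π i) 0 = i 0 := by rw [occMap132_0, h0]
  have e1 : occMap132 (Finv π) (occMap132 π i) 1 = i 1 := by
    rw [occMap132_1, occMap132_2, phiHat_Finv, key1, Equiv.symm_apply_apply]
  have e2 : occMap132 (Finv π) (occMap132 π i) 2 = i 2 := by
    rw [occMap132_2, occMap132_1, phiHat_Finv, key1, Equiv.symm_apply_apply]
  funext k
  rcases k with ⟨kv, hk⟩
  interval_cases kv
  · exact e0
  · exact e1
  · exact e2

noncomputable def E123 (π : Equiv.Perm (Fin (n+1))) :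
    {i : Fin 3 → Fin (n+1) // IsMeshOcc perm123 S18 π i} ≃
    {i : Fin 3 → Fin (n+1) // IsMeshOcc perm123 S17 (Finv π) i} where
  toFun x := ⟨occMap123 π x.1, isOcc_map123 π x.1 x.2⟩
  invFun y := ⟨occMap123 (Finv π) y.1, by
    have := isOcc_map123' (Finv π) y.1 y.2
    rwa [Finv_invol] at this⟩
  left_inv x := by
    apply Subtype.ext
    have h0 : x.1 0 = 0 := by
      have := (char_123_S18 π x.1).mp x.2
      exact Fin.val_injective (by simpa using this.1)
    exact occMap123_roundtrip π x.1 h0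
  right_inv y := by
    apply Subtype.ext
    have h0 : y.1 0 = 0 := by
      have := (char_123_S17 (Finv π) y.1).mp y.2
      exact Fin.val_injective (by simpa using this.1)
    have := occMap123_roundtrip (Finv π) y.1 h0
    rwa [Finv_invol] at this

noncomputable def E132 (π : Equiv.Perm (Fin (n+1))) :
    {i : Fin 3 → Fin (n+1) // IsMeshOcc perm132 S18 π i} ≃
    {i : Fin 3 → Fin (n+1) // IsMeshOcc perm132 S17 (Finv π) i} where
  toFun x := ⟨occMap132 π x.1, isOcc_map132 π x.1 x.2⟩
  invFun y := ⟨occMap132 (Finv π) y.1, by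
    have := isOcc_map132' (Finv π) y.1 y.2
    rwa [Finv_invol] at this⟩
  left_inv x := by
    apply Subtype.ext
    have h0 : x.1 0 = 0 := by
      have := (char_132_S18 π x.1).mp x.2
      exact Fin.val_injective (by simpa using this.1)
    exact occMap132_roundtrip π x.1 h0
  right_inv y := by
    apply Subtype.ext
    have h0 : y.1 0 = 0 := by
      have := (char_132_S17 (Finv π) y.1).mp y.2
      exact Fin.val_injective (by simpa using this.1)
    have := occMap132_roundtrip (Finv π) y.1 h0
    rwa [Finv_invol] at this

lemma occ123_Finv (π : Equiv.Perm (Fin (n+1))) :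
    occ perm123 S18 π = occ perm123 S17 (Finv π) := Nat.card_congr (E123 π)

lemma occ132_Finv (π : Equiv.Perm (Fin (n+1))) :
    occ perm132 S18 π = occ perm132 S17 (Finv π) := Nat.card_congr (E132 π)

lemma occ_zero_of_card_zero (τ : Equiv.Perm (Fin 3)) (R : Set (ℕ × ℕ))
    (π : Equiv.Perm (Fin 0)) : occ τ R π = 0 := by
  unfold occ
  have : IsEmpty (Fin 3 → Fin 0) := by
    refine ⟨fun f => ?_⟩
    exact (f 0).elim0
  exact Nat.card_of_isEmpty

lemma count_S18 (m k ℓ : ℕ) :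
    Nat.card {π : Equiv.Perm (Fin m) // occ perm123 S18 π = k ∧ occ perm132 S18 π = ℓ} =
    Nat.card {π : Equiv.Perm (Fin m) // occ perm123 S17 π = k ∧ occ perm132 S17 π = ℓ} := by
  cases m with
  | zero =>
    apply Nat.card_congr
    apply Equiv.subtypeEquivRight
    intro π
    rw [occ_zero_of_card_zero, occ_zero_of_card_zero, occ_zero_of_card_zero,
      occ_zero_of_card_zero]
  | succ n =>
    apply Nat.card_congr
    refine ⟨fun x => ⟨Finv x.1, ?_⟩, fun y => ⟨Finv y.1, ?_⟩, ?_, ?_⟩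
    · exact ⟨(occ123_Finv x.1).symm.trans x.2.1, (occ132_Finv x.1).symm.trans x.2.2⟩
    · constructor
      · rw [occ123_Finv (Finv y.1), Finv_invol]
        exact y.2.1
      · rw [occ132_Finv (Finv y.1), Finv_invol]
        exact y.2.2
    · intro x
      apply Subtype.ext
      exact Finv_invol x.1
    · intro y
      apply Subtype.ext
      exact Finv_invol y.1

lemma perm123_symm : perm123.symm = perm123 := by
  apply Equiv.ext
  decide

lemma perm132_symm : perm132.symm = perm132 := by
  apply Equiv.ext
  decide

lemma occ_S17' (π : Equiv.Perm (Fin n)) (τ : Equiv.Perm (Fin 3)) (hτ : τ.symm = τ) :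
    occ τ S17' π = occ τ S17 π.symm := by
  rw [S17'_eq]
  exact occ_transp τ hτ S17 π

lemma occ_S18' (π : Equiv.Perm (Fin n)) (τ : Equiv.Perm (Fin 3)) (hτ : τ.symm = τ) :
    occ τ S18' π = occ τ S18 π.symm := by
  rw [S18'_eq]
  exact occ_transp τ hτ S18 π

lemma count_transfer (R R' : Set (ℕ × ℕ))
    (h : ∀ (π : Equiv.Perm (Fin n)) (τ : Equiv.Perm (Fin 3)), τ.symm = τ →
      occ τ R' π = occ τ R π.symm) (k ℓ : ℕ) :
    Nat.card {π : Equiv.Perm (Fin n) // occ perm123 R' π = k ∧ occ perm132 R' π = ℓ} =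
    Nat.card {π : Equiv.Perm (Fin n) // occ perm123 R π = k ∧ occ perm132 R π = ℓ} := by
  apply Nat.card_congr
  refine ⟨fun x => ⟨x.1.symm, ?_⟩, fun y => ⟨y.1.symm, ?_⟩, ?_, ?_⟩
  · refine ⟨?_, ?_⟩
    · rw [← h x.1 perm123 perm123_symm]; exact x.2.1
    · rw [← h x.1 perm132 perm132_symm]; exact x.2.2
  · refine ⟨?_, ?_⟩
    · rw [h y.1.symm perm123 perm123_symm, Equiv.symm_symm]; exact y.2.1
    · rw [h y.1.symm perm132 perm132_symm, Equiv.symm_symm]; exact y.2.2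
  · intro x
    apply Subtype.ext
    exact Equiv.symm_symm x.1
  · intro y
    apply Subtype.ext
    exact Equiv.symm_symm y.1

end Assembly

theorem statement_3 :
    ∀ S ∈ ({S18, S17', S18'} : Set (Set (ℕ × ℕ))), ∀ n k ℓ : ℕ,
      Nat.card {π : Equiv.Perm (Fin n) // occ perm123 S π = k ∧ occ perm132 S π = ℓ} =
      Nat.card {π : Equiv.Perm (Fin n) // occ perm123 S17 π = k ∧ occ perm132 S17 π = ℓ} := by
  intro S hS n k ℓ
  simp only [Set.mem_insert_iff, Set.mem_singleton_iff] at hS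
  rcases hS with rfl | rfl | rfl
  · exact count_S18 n k ℓ
  · exact count_transfer S17 S17' (fun π τ hτ => occ_S17' π τ hτ) k ℓ
  · exact (count_transfer S18 S18' (fun π τ hτ => occ_S18' π τ hτ) k ℓ).trans (count_S18 n k ℓ)
end PhiHat
end Char
end
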